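/- arXiv:2102.13046 — 11 statements merged into one kernel-verified Lean document; each statement's English description precedes it below -/
import Mathlib

section
/- Let X, Y be separated nets in ℝ^d, let φ : (0,∞) → (0,∞) be an increasing function with φ(R) ∈ o(R) and such that there is a constant C_φ > 0 with φ(R) ≤ C_φ · φ(R/2) for all R > 0. If f : X → Y is an injection with disp_R(f) ≤ φ(R) for every R > 0 (i.e., ‖f(x) − x‖ ≤ φ(‖x‖) whenever ‖x‖ ≤ R), then disp_R(f⁻¹) ∈ O(φ(R)), i.e., there is a constant K such that ‖f(x) − x‖ ≤ K·φ(‖f(x)‖) for all x ∈ X with ‖f(x)‖ sufficiently large. -/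
open Filter Metric Set Topology

noncomputable section

/-- A separated net in Euclidean space: separated and a net. -/
def SepNet {d : ℕ} (X : Set (EuclideanSpace ℝ (Fin d))) : Prop :=
  (∃ δ > 0, ∀ x ∈ X, ∀ y ∈ X, x ≠ y → δ ≤ dist x y) ∧
  (∃ θ : ℝ, ∀ p : EuclideanSpace ℝ (Fin d), ∃ x ∈ X, dist p x ≤ θ)

/-- Displacement of `f` restricted to points of `X` of norm at most `R`
(set to `0` when the relevant set is empty, via `Real.sSup`). -/
def dispR {d : ℕ} (X : Set (EuclideanSpace ℝ (Fin d)))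
    (f : EuclideanSpace ℝ (Fin d) → EuclideanSpace ℝ (Fin d)) (R : ℝ) : ℝ :=
  sSup ((fun x => dist (f x) x) '' (X ∩ Metric.closedBall 0 R))

theorem stmt0 {d : ℕ} (X Y : Set (EuclideanSpace ℝ (Fin d)))
    (hX : SepNet X) (hY : SepNet Y)
    (φ : ℝ → ℝ) (hφpos : ∀ R > (0:ℝ), 0 < φ R) (hφmono : MonotoneOn φ (Set.Ioi 0))
    (hφo : Tendsto (fun R => φ R / R) atTop (𝓝 0))
    (Cφ : ℝ) (hCφ : 0 < Cφ) (hφhalf : ∀ R > (0:ℝ), φ R ≤ Cφ * φ (R / 2))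
    (f : EuclideanSpace ℝ (Fin d) → EuclideanSpace ℝ (Fin d))
    (hmap : Set.MapsTo f X Y) (hinj : Set.InjOn f X)
    (hdisp : ∀ x ∈ X, dist (f x) x ≤ φ ‖x‖) :
    ∃ K > (0:ℝ), ∃ R₀ : ℝ, ∀ x ∈ X, R₀ ≤ ‖f x‖ → dist (f x) x ≤ K * φ ‖f x‖ := by
  have h2 : ∀ᶠ R in atTop, φ R / R < 1/2 :=
    hφo.eventually (gt_mem_nhds (by norm_num))
  obtain ⟨a, ha⟩ := eventually_atTop.mp h2
  set R₁ : ℝ := max a 1 with hR₁def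
  have hR₁pos : (0:ℝ) < R₁ := lt_of_lt_of_le one_pos (le_max_right a 1)
  have hφR₁ : 0 < φ R₁ := hφpos R₁ hR₁pos
  have hhalf : ∀ R, R₁ ≤ R → φ R ≤ R / 2 := by
    intro R hR
    have hRpos : 0 < R := lt_of_lt_of_le hR₁pos hR
    have h3 := ha R (le_trans (le_max_left a 1) hR)
    have h4 := (div_lt_iff₀ hRpos).mp h3
    linarith
  set M : ℝ := max (φ 0) (φ R₁) with hMdef
  have hM : 0 < M := lt_of_lt_of_le hφR₁ (le_max_right _ _)
  refine ⟨max Cφ (M / φ R₁), lt_of_lt_of_le hCφ (le_max_left _ _), R₁, ?_⟩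
  intro x hx hfx
  have hfxpos : 0 < ‖f x‖ := lt_of_lt_of_le hR₁pos hfx
  have hφfx : 0 < φ ‖f x‖ := hφpos _ hfxpos
  have hd := hdisp x hx
  have hdn : dist (f x) x = ‖f x - x‖ := dist_eq_norm _ _
  by_cases hcase : R₁ ≤ ‖x‖
  · have hxpos : 0 < ‖x‖ := lt_of_lt_of_le hR₁pos hcase
    have h1 : φ ‖x‖ ≤ ‖x‖ / 2 := hhalf _ hcase
    have h2' : ‖x‖ - ‖f x‖ ≤ ‖f x - x‖ := by
      have := abs_norm_sub_norm_le (f x) x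
      have := abs_le.mp this
      linarith [this.1]
    have hhalfle : ‖x‖ / 2 ≤ ‖f x‖ := by rw [hdn] at hd; linarith
    have hmono1 : φ (‖x‖ / 2) ≤ φ ‖f x‖ :=
      hφmono (by simpa using half_pos hxpos) (by simpa using hfxpos) hhalfle
    have hCle : φ ‖x‖ ≤ Cφ * φ ‖f x‖ := by
      have := hφhalf ‖x‖ hxpos
      nlinarith
    have : Cφ * φ ‖f x‖ ≤ max Cφ (M / φ R₁) * φ ‖f x‖ :=
      mul_le_mul_of_nonneg_right (le_max_left _ _) hφfx.le
    linarith
  · push_neg at hcase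
    have hφxM : φ ‖x‖ ≤ M := by
      rcases eq_or_lt_of_le (norm_nonneg x) with h0 | h0
      · rw [← h0]; exact le_max_left _ _
      · exact le_trans (hφmono (by simpa using h0) (by simpa using hR₁pos) hcase.le)
          (le_max_right _ _)
    have hmono2 : φ R₁ ≤ φ ‖f x‖ :=
      hφmono (by simpa using hR₁pos) (by simpa using hfxpos) hfx
    have hK : M ≤ max Cφ (M / φ R₁) * φ ‖f x‖ := by
      have h5 : M / φ R₁ * φ R₁ = M := div_mul_cancel₀ M hφR₁.ne'
      have h6 : M / φ R₁ * φ R₁ ≤ max Cφ (M / φ R₁) * φ ‖f x‖ := by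
        apply mul_le_mul (le_max_right _ _) hmono2 hφR₁.le
        exact le_trans (div_nonneg hM.le hφR₁.le) (le_max_right _ _)
      linarith
    linarith
end
end

section
/- Let X, Y be separated nets in ℝ^d and f : X → Y an injection with disp_R(f) ∈ o(R). Then disp_R(f⁻¹) ∈ o(R); that is, sup{‖f⁻¹(y) − y‖ : y ∈ f(X), ‖y‖ ≤ R} / R → 0 as R → ∞. -/
open Filter Metric Set Topology

noncomputable section

/-- A separated bounded set in a proper metric space is finite. -/
lemma finite_of_separated_of_bounded {E : Type*} [MetricSpace E] [ProperSpace E]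
    {s : Set E} {δ : ℝ} (hδ : 0 < δ)
    (hsep : ∀ x ∈ s, ∀ y ∈ s, x ≠ y → δ ≤ dist x y)
    (hb : Bornology.IsBounded s) : s.Finite := by
  by_contra h
  rw [← Set.not_infinite, not_not] at h
  obtain ⟨c, hc⟩ := h.nonempty
  obtain ⟨r, hsub⟩ := hb.subset_closedBall c
  obtain ⟨x, -, hx⟩ := h.exists_accPt_of_subset_isCompact (isCompact_closedBall c r) hsub
  rw [accPt_iff_nhds] at hx
  obtain ⟨y1, ⟨hy1b, hy1s⟩, hy1x⟩ := hx (ball x (δ/2)) (ball_mem_nhds _ (by linarith))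
  rw [mem_ball] at hy1b
  have hpos : 0 < dist x y1 := dist_pos.mpr (Ne.symm hy1x)
  obtain ⟨y2, ⟨hy2b, hy2s⟩, hy2x⟩ := hx (ball x (min (δ/2) (dist x y1)))
    (ball_mem_nhds _ (lt_min (by linarith) hpos))
  rw [mem_ball, lt_min_iff] at hy2b
  have h12 : y2 ≠ y1 := by
    intro he; subst he
    rw [dist_comm] at hy2b
    exact absurd hy2b.2 (lt_irrefl _)
  have hs := hsep y2 hy2s y1 hy1s h12
  have := dist_triangle y2 x y1
  rw [dist_comm x y1] at this
  linarith [hy2b.1]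

theorem stmt1 {d : ℕ} (X Y : Set (EuclideanSpace ℝ (Fin d)))
    (hX : SepNet X) (hY : SepNet Y)
    (f : EuclideanSpace ℝ (Fin d) → EuclideanSpace ℝ (Fin d))
    (hmap : Set.MapsTo f X Y) (hinj : Set.InjOn f X)
    (ho : Tendsto (fun R => dispR X f R / R) atTop (𝓝 0)) :
    Tendsto (fun R => dispR (f '' X) (Function.invFunOn f X) R / R) atTop (𝓝 0) := by

  classical
  obtain ⟨⟨δ, hδ, hsep⟩, -⟩ := hX
  set g := Function.invFunOn f X with hg
  -- finiteness / boundedness facts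
  have hfin : ∀ S : ℝ, (X ∩ Metric.closedBall 0 S).Finite := fun S =>
    finite_of_separated_of_bounded hδ
      (fun x hx y hy hxy => hsep x hx.1 y hy.1 hxy)
      ((Metric.isBounded_closedBall).subset inter_subset_right)
  have hbdd : ∀ S : ℝ, BddAbove ((fun x => dist (f x) x) '' (X ∩ Metric.closedBall 0 S)) :=
    fun S => ((hfin S).image _).bddAbove
  have le_disp : ∀ S : ℝ, ∀ x ∈ X, ‖x‖ ≤ S → dist (f x) x ≤ dispR X f S := by
    intro S x hx hxS
    exact le_csSup (hbdd S) ⟨x, ⟨hx, by simpa [mem_closedBall_zero_iff] using hxS⟩, rfl⟩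
  have disp_nonneg : ∀ (Z : Set (EuclideanSpace ℝ (Fin d)))
      (h : EuclideanSpace ℝ (Fin d) → EuclideanSpace ℝ (Fin d)) (S : ℝ), 0 ≤ dispR Z h S := by
    intro Z h S
    exact Real.sSup_nonneg (by rintro z ⟨x, -, rfl⟩; exact dist_nonneg)
  -- choose S₀ with dispR X f S < S/2 for S ≥ S₀, and S₀ ≥ 1
  have h2 : ∀ᶠ S in atTop, dispR X f S / S < 1/2 := by
    have := ho.eventually (eventually_lt_nhds (by norm_num : (0:ℝ) < 1/2))
    simpa using this
  obtain ⟨S₀, hS₀⟩ := (h2.and (eventually_ge_atTop (1:ℝ))).exists_forall_of_atTop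
  have hkey : ∀ S ≥ S₀, dispR X f S < S / 2 := by
    intro S hS
    have h := hS₀ S hS
    have hS1 : (1:ℝ) ≤ S := h.2
    have := (div_lt_iff₀ (by linarith : (0:ℝ) < S)).mp h.1
    linarith
  -- main bound
  have hmain : ∀ R ≥ S₀, dispR (f '' X) g R ≤ dispR X f (2 * R) := by
    intro R hR
    have hR1 : (1:ℝ) ≤ R := (hS₀ R hR).2
    apply Real.sSup_le
    · rintro z ⟨y, ⟨hyf, hyb⟩, rfl⟩
      obtain ⟨x0, hx0, hfx0⟩ := hyf
      have hyx : g y ∈ X := Function.invFunOn_mem ⟨x0, hx0, hfx0⟩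
      have hfy : f (g y) = y := Function.invFunOn_eq ⟨x0, hx0, hfx0⟩
      set x := g y with hx
      rw [mem_closedBall_zero_iff] at hyb
      have hdist : dist x y = dist (f x) x := by rw [hfy, dist_comm]
      have hxle : ‖x‖ ≤ 2 * R := by
        by_contra hcon
        push_neg at hcon
        have hxS : ‖x‖ ≥ S₀ := by linarith
        have h1 : dist (f x) x ≤ dispR X f ‖x‖ := le_disp _ x hyx le_rfl
        have h2' : dispR X f ‖x‖ < ‖x‖ / 2 := hkey _ hxS
        have h3 : ‖x‖ - ‖y‖ ≤ dist (f x) x := by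
          rw [dist_comm, dist_eq_norm, hfy]
          exact norm_sub_norm_le x y
        linarith
      calc dist x y = dist (f x) x := hdist
        _ ≤ dispR X f (2 * R) := le_disp _ x hyx hxle
    · exact disp_nonneg X f (2 * R)
  -- squeeze
  have htwo : Tendsto (fun R : ℝ => dispR X f (2 * R) / (2 * R)) atTop (𝓝 0) :=
    ho.comp (tendsto_id.const_mul_atTop two_pos)
  have hlim : Tendsto (fun R : ℝ => 2 * (dispR X f (2 * R) / (2 * R))) atTop (𝓝 0) := by
    simpa using htwo.const_mul 2
  apply squeeze_zero' (g := fun R => 2 * (dispR X f (2 * R) / (2 * R)))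
  · filter_upwards [eventually_ge_atTop S₀] with R hR
    exact div_nonneg (disp_nonneg _ _ _) (by linarith [(hS₀ R hR).2])
  · filter_upwards [eventually_ge_atTop S₀] with R hR
    have hR1 : (1:ℝ) ≤ R := (hS₀ R hR).2
    have hRpos : (0:ℝ) < R := by linarith
    have hmn := hmain R hR
    have heq : 2 * (dispR X f (2 * R) / (2 * R)) = dispR X f (2 * R) / R := by
      field_simp
    rw [heq]
    gcongr
  · exact hlim
end
end

section
/- Let X, Y be two separated nets in ℝ^d. Then there exists a bijection f : X → Y such that both disp_R(f) ∈ O(R) and disp_R(f⁻¹) ∈ O(R); equivalently (after assuming 0 ∉ X ∪ Y), there is C > 0 with ‖f(x) − x‖ ≤ C‖x‖ for all x ∈ X and ‖f⁻¹(y) − y‖ ≤ C‖y‖ for all y ∈ Y. -/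
/-!
Enumerate `X` and `Y` by nondecreasing norm, `x₀, x₁, …` and `y₀, y₁, …`, and match `xₙ ↦ yₙ`.
Comparing volumes of balls, the `δ`-separated set `X` has at most `((r + δ/2) / (δ/2))^d` points of
norm `≤ r`, while the `θ`-net `Y` has at least `((R - θ) / θ)^d` points of norm `≤ R`. Since
`x₀, …, xₙ` are `n + 1` points of norm `≤ ‖xₙ‖` and every point of `Y` of norm `< ‖yₙ‖` is one of
`y₀, …, yₙ₋₁`, this gives `‖yₙ‖ ≤ 2θ + (2θ/δ) ‖xₙ‖`, and symmetrically. Norms on `X ∪ Y` are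
bounded away from `0`, so the additive constant is absorbed into a linear bound.
-/

open Filter Metric Set Topology

noncomputable section

open MeasureTheory Module
open scoped Finset

theorem exists_bijOn_nat_monotone {α : Type*} {s : Set α} (g : α → ℝ) (hs : s.Infinite)
    (hfin : ∀ R, {x ∈ s | g x ≤ R}.Finite) :
    ∃ e : ℕ → α, BijOn e univ s ∧ Monotone (g ∘ e) := by
  have : Countable s := by
    refine ((countable_iUnion fun n : ℕ => (hfin n).countable).mono fun x hx => ?_).to_subtype
    exact mem_iUnion.2 ⟨⌈g x⌉₊, hx, Nat.le_ceil _⟩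
  obtain ⟨c, hc⟩ := exists_injective_nat s
  let key : s → ℝ ×ₗ ℕ := fun x => toLex (g x, c x)
  let : LinearOrder s := LinearOrder.lift' key fun x y h => hc (by simp_all [key])
  have hg : Monotone (fun x : s => g x) := fun x y hxy =>
    Prod.Lex.monotone_fst _ _ (show key x ≤ key y from hxy)
  have hIic (a : s) : (Iic a).Finite :=
    ((hfin (g a)).preimage Subtype.val_injective.injOn).subset fun x hx => ⟨x.2, hg hx⟩
  let : LocallyFiniteOrder s :=
    LocallyFiniteOrder.ofFiniteIcc fun a b => (hIic b).subset Icc_subset_Iic_self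
  let : SuccOrder s := LinearLocallyFiniteOrder.succOrder s
  let : PredOrder s := LinearLocallyFiniteOrder.predOrder s
  obtain ⟨a⟩ : Nonempty s := hs.nonempty.to_subtype
  obtain ⟨m, -, hm⟩ := exists_min_image _ id (hIic a) ⟨a, self_mem_Iic⟩
  let : OrderBot s :=
    { bot := m, bot_le := fun x => (le_total x a).elim (hm x) ((hm a self_mem_Iic).trans ·) }
  have : Infinite s := hs.to_subtype
  have : NoMaxOrder s := ⟨fun a => by
    obtain ⟨b, hb⟩ := (hIic a).infinite_compl.nonempty
    exact ⟨b, lt_of_not_ge hb⟩⟩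
  let e : s ≃o ℕ := orderIsoNatOfLinearSuccPredArch
  refine ⟨fun n => e.symm n, ⟨fun n _ => (e.symm n).2,
    fun m _ n _ h => e.symm.injective (Subtype.ext h), fun x hx => ⟨e ⟨x, hx⟩, trivial, by simp⟩⟩,
    hg.comp e.symm.monotone⟩

namespace MeasureTheory.Measure

theorem addHaar_real_ball_of_pos {E : Type*} [NormedAddCommGroup E] [NormedSpace ℝ E]
    [MeasurableSpace E] [BorelSpace E] [FiniteDimensional ℝ E] (μ : Measure E)
    [μ.IsAddHaarMeasure] (x : E) {r : ℝ} (hr : 0 < r) :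
    μ.real (ball x r) = r ^ finrank ℝ E * μ.real (ball 0 1) := by
  simp [measureReal_def, addHaar_ball_of_pos μ x hr, hr.le]

end MeasureTheory.Measure

theorem nonneg_of_forall_exists_dist_le {α : Type*} [PseudoMetricSpace α] [Nonempty α]
    {Y : Set α} {θ : ℝ} (hY : ∀ p, ∃ y ∈ Y, dist p y ≤ θ) : 0 ≤ θ :=
  let ⟨_, _, h⟩ := hY (Classical.arbitrary α); dist_nonneg.trans h

theorem infinite_of_forall_exists_dist_le {E : Type*} [NormedAddCommGroup E] [NormedSpace ℝ E]
    [Nontrivial E] {Y : Set E} {θ : ℝ}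
    (hY : ∀ p, ∃ y ∈ Y, dist p y ≤ θ) : Y.Infinite := fun hfin =>
  NormedSpace.unbounded_univ ℝ E <| (hfin.isBounded.cthickening (δ := θ)).subset fun p _ =>
    let ⟨y, hy, hpy⟩ := hY p; mem_cthickening_of_dist_le p y θ Y hy hpy

section Counting

variable {E : Type*} [NormedAddCommGroup E] [NormedSpace ℝ E] [FiniteDimensional ℝ E]

theorem card_mul_pow_le_of_pairwise_le_dist {S : Finset E} {δ R : ℝ} (hδ : 0 < δ) (hR : 0 ≤ R)
    (hS : (S : Set E).Pairwise (δ ≤ dist · ·)) (hSR : (S : Set E) ⊆ closedBall 0 R) :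
    #S * (δ / 2) ^ finrank ℝ E ≤ (R + δ / 2) ^ finrank ℝ E := by
  borelize E
  set μ : Measure E := Measure.addHaar
  have hdisj : (S : Set E).PairwiseDisjoint (ball · (δ / 2)) := fun x hx y hy hxy =>
    ball_disjoint_ball (by linarith [hS hx hy hxy])
  have hsub : (⋃ x ∈ S, ball x (δ / 2)) ⊆ closedBall 0 (R + δ / 2) :=
    iUnion₂_subset fun x hx => (ball_subset_closedBall).trans
      (closedBall_subset_closedBall' (by linarith [mem_closedBall.1 (hSR hx)]))
  refine le_of_mul_le_mul_right ?_
    (ENNReal.toReal_pos (measure_ball_pos μ 0 one_pos).ne' measure_ball_lt_top.ne)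
  calc #S * (δ / 2) ^ finrank ℝ E * μ.real (ball 0 1)
      = μ.real (⋃ x ∈ S, ball x (δ / 2)) := by
        rw [measureReal_biUnion_finset hdisj fun _ _ => measurableSet_ball]
        simp [Measure.addHaar_real_ball_of_pos μ _ (half_pos hδ), mul_assoc]
    _ ≤ μ.real (closedBall 0 (R + δ / 2)) := measureReal_mono hsub measure_closedBall_lt_top.ne
    _ = (R + δ / 2) ^ finrank ℝ E * μ.real (ball 0 1) :=
        Measure.addHaar_real_closedBall μ _ (by positivity)

theorem pow_le_card_mul_of_forall_exists_dist_le {Y : Set E} {F : Finset E} {θ R : ℝ}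
    (hθR : θ ≤ R) (hY : ∀ p, ∃ y ∈ Y, dist p y ≤ θ) (hF : Y ∩ closedBall 0 R ⊆ F) :
    (R - θ) ^ finrank ℝ E ≤ #F * θ ^ finrank ℝ E := by
  borelize E
  set μ : Measure E := Measure.addHaar
  have hθ : 0 ≤ θ := nonneg_of_forall_exists_dist_le hY
  have hsub : closedBall 0 (R - θ) ⊆ ⋃ y ∈ F, closedBall y θ := fun p hp => by
    obtain ⟨y, hy, hpy⟩ := hY p
    have hyR : y ∈ closedBall 0 R := mem_closedBall.2 <| by
      linarith [mem_closedBall.1 hp, dist_triangle y p 0, dist_comm p y]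
    exact mem_iUnion₂.2 ⟨y, hF ⟨hy, hyR⟩, mem_closedBall.2 hpy⟩
  refine le_of_mul_le_mul_right ?_
    (ENNReal.toReal_pos (measure_ball_pos μ 0 one_pos).ne' measure_ball_lt_top.ne)
  calc (R - θ) ^ finrank ℝ E * μ.real (ball 0 1)
      = μ.real (closedBall 0 (R - θ)) := (Measure.addHaar_real_closedBall μ _ (by linarith)).symm
    _ ≤ μ.real (⋃ y ∈ F, closedBall y θ) :=
        measureReal_mono hsub (measure_biUnion_lt_top F.finite_toSet fun _ _ =>
          measure_closedBall_lt_top).ne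
    _ ≤ ∑ y ∈ F, μ.real (closedBall y θ) := measureReal_biUnion_finset_le F _
    _ = #F * θ ^ finrank ℝ E * μ.real (ball 0 1) := by
        simp [Measure.addHaar_real_closedBall μ _ hθ, mul_assoc]

theorem finite_inter_closedBall_of_pairwise_le_dist {S : Set E} {δ : ℝ} (hδ : 0 < δ)
    (hS : S.Pairwise (δ ≤ dist · ·)) (R : ℝ) : (S ∩ closedBall 0 R).Finite := by
  rcases lt_or_ge R 0 with hR | hR
  · simp [closedBall_eq_empty.2 hR]
  by_contra hinf
  obtain ⟨N, hN⟩ := exists_nat_gt ((R + δ / 2) ^ finrank ℝ E / (δ / 2) ^ finrank ℝ E)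
  obtain ⟨F, hFS, rfl⟩ := Set.Infinite.exists_subset_card_eq hinf N
  have := card_mul_pow_le_of_pairwise_le_dist hδ hR (hS.mono fun x hx => (hFS hx).1)
    fun x hx => (hFS hx).2
  rw [div_lt_iff₀ (by positivity)] at hN
  linarith

end Counting

theorem exists_pos_le_norm_of_finite {E : Type*} [NormedAddCommGroup E] {S : Set E}
    (hS : (S ∩ closedBall 0 1).Finite) (h0 : (0 : E) ∉ S) : ∃ m > 0, ∀ x ∈ S, m ≤ ‖x‖ := by
  obtain ⟨ε, hε, hball⟩ := Metric.isOpen_iff.1 hS.isClosed.isOpen_compl 0 fun h => h0 h.1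
  refine ⟨min ε 1, lt_min hε one_pos, fun x hx => le_of_not_gt fun hlt => hball ?_ ⟨hx, ?_⟩⟩
  · exact mem_ball_zero_iff.2 (hlt.trans_le (min_le_left _ _))
  · exact mem_closedBall_zero_iff.2 (hlt.trans_le (min_le_right _ _)).le

theorem dist_le_mul_norm_of_norm_le {E : Type*} [SeminormedAddCommGroup E] {a b : E}
    {c k m : ℝ} (hm : 0 < m) (ha : m ≤ ‖a‖) (hc : 0 ≤ c) (hb : ‖b‖ ≤ c + k * ‖a‖) :
    dist b a ≤ (1 + c / m + k) * ‖a‖ := by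
  have : c ≤ c / m * ‖a‖ := by
    calc c = c / m * m := (div_mul_cancel₀ c hm.ne').symm
      _ ≤ c / m * ‖a‖ := by gcongr
  linarith [dist_le_norm_add_norm b a]

section Matching

variable {E : Type*} [NormedAddCommGroup E] [NormedSpace ℝ E] [FiniteDimensional ℝ E]

theorem norm_le_of_monotone_enumerations [Nontrivial E] {X Y : Set E} {δ θ : ℝ} (hδ : 0 < δ)
    (hX : X.Pairwise (δ ≤ dist · ·)) (hY : ∀ p, ∃ y ∈ Y, dist p y ≤ θ) {eX eY : ℕ → E}
    (heX : Function.Injective eX) (hXeX : range eX ⊆ X) (hYeY : Y ⊆ range eY)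
    (hmX : Monotone (‖eX ·‖)) (hmY : Monotone (‖eY ·‖)) (n : ℕ) :
    ‖eY n‖ ≤ 2 * θ + 2 * θ / δ * ‖eX n‖ := by
  classical
  set d := finrank ℝ E
  set a := ‖eX n‖
  have hθ : 0 ≤ θ := nonneg_of_forall_exists_dist_le hY
  have hpacking : (n + 1) * (δ / 2) ^ d ≤ (a + δ / 2) ^ d := by
    have := card_mul_pow_le_of_pairwise_le_dist (S := (Finset.range (n + 1)).image eX) hδ
      (norm_nonneg _) (hX.mono (by simpa using (image_subset_range _ _).trans hXeX)) (by
        simpa [Set.subset_def, Nat.lt_succ_iff] using fun k hk => hmX hk)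
    simpa [Finset.card_image_of_injective _ heX] using this
  refine le_of_forall_lt_imp_le_of_dense fun R hR => ?_
  rcases le_or_gt R θ with hRθ | hθR
  · have : 0 ≤ 2 * θ / δ * a := by positivity
    linarith
  have hcovering : (R - θ) ^ d ≤ n * θ ^ d := by
    have hF : Y ∩ closedBall 0 R ⊆ (Finset.range n).image eY := by
      rintro _ ⟨hy, hyR⟩
      obtain ⟨k, rfl⟩ := hYeY hy
      have hkn : k < n := lt_of_not_ge fun hnk =>
        hR.not_ge ((hmY hnk).trans (mem_closedBall_zero_iff.1 hyR))
      simpa using ⟨k, hkn, rfl⟩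
    refine (pow_le_card_mul_of_forall_exists_dist_le hθR.le hY hF).trans ?_
    gcongr
    exact_mod_cast Finset.card_image_le.trans (Finset.card_range n).le
  have : ((R - θ) * (δ / 2)) ^ d ≤ ((a + δ / 2) * θ) ^ d := by
    calc ((R - θ) * (δ / 2)) ^ d ≤ (n * θ ^ d) * (δ / 2) ^ d := by
          rw [mul_pow]; gcongr
      _ ≤ ((n + 1) * (δ / 2) ^ d) * θ ^ d := by nlinarith [pow_nonneg hθ d, pow_pos (half_pos hδ) d]
      _ ≤ ((a + δ / 2) * θ) ^ d := by rw [mul_pow]; gcongr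
  have := (pow_le_pow_iff_left₀ (by nlinarith) (by positivity) finrank_pos.ne').1 this
  rw [div_mul_eq_mul_div, ← sub_le_iff_le_add', le_div_iff₀ hδ]
  linarith

theorem exists_bijOn_dist_le_mul_norm {X Y : Set E} {δ θ : ℝ} (hδ : 0 < δ)
    (hXsep : X.Pairwise (δ ≤ dist · ·)) (hYsep : Y.Pairwise (δ ≤ dist · ·))
    (hXnet : ∀ p, ∃ x ∈ X, dist p x ≤ θ) (hYnet : ∀ p, ∃ y ∈ Y, dist p y ≤ θ)
    (h0X : (0 : E) ∉ X) (h0Y : (0 : E) ∉ Y) :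
    ∃ f : E → E, BijOn f X Y ∧ ∃ C > 0,
      (∀ x ∈ X, dist (f x) x ≤ C * ‖x‖) ∧ (∀ x ∈ X, dist (f x) x ≤ C * ‖f x‖) := by
  obtain ⟨x₀, hx₀, -⟩ := hXnet 0
  have : Nontrivial E := nontrivial_of_ne x₀ 0 fun h => h0X (h ▸ hx₀)
  have hθ : 0 ≤ θ := nonneg_of_forall_exists_dist_le hXnet
  have hXfin := finite_inter_closedBall_of_pairwise_le_dist hδ hXsep
  have hYfin := finite_inter_closedBall_of_pairwise_le_dist hδ hYsep
  obtain ⟨eX, heX, hmX⟩ := exists_bijOn_nat_monotone norm (infinite_of_forall_exists_dist_le hXnet)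
    fun R => (hXfin R).subset fun x hx => ⟨hx.1, mem_closedBall_zero_iff.2 hx.2⟩
  obtain ⟨eY, heY, hmY⟩ := exists_bijOn_nat_monotone norm (infinite_of_forall_exists_dist_le hYnet)
    fun R => (hYfin R).subset fun x hx => ⟨hx.1, mem_closedBall_zero_iff.2 hx.2⟩
  obtain ⟨m, hm, hmle⟩ := exists_pos_le_norm_of_finite (S := X ∪ Y)
    (by simpa only [union_inter_distrib_right] using (hXfin 1).union (hYfin 1)) (by simp [h0X, h0Y])
  have hYX := norm_le_of_monotone_enumerations hδ hXsep hYnet (injOn_univ.1 heX.injOn)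
    (mapsTo_univ_iff_range_subset.1 heX.mapsTo) heY.surjOn.subset_range hmX hmY
  have hXY := norm_le_of_monotone_enumerations hδ hYsep hXnet (injOn_univ.1 heY.injOn)
    (mapsTo_univ_iff_range_subset.1 heY.mapsTo) heX.surjOn.subset_range hmY hmX
  refine ⟨eY ∘ Function.invFunOn eX univ, heY.comp (heX.symm heX.invOn_invFunOn.symm),
    1 + 2 * θ / m + 2 * θ / δ, by positivity, fun x hx => ?_, fun x hx => ?_⟩
  all_goals
    obtain ⟨n, -, rfl⟩ := heX.surjOn hx
    rw [Function.comp_apply, heX.invOn_invFunOn.1 trivial]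
  · exact dist_le_mul_norm_of_norm_le hm (hmle _ (.inl hx)) (by positivity) (hYX n)
  · rw [dist_comm]
    exact dist_le_mul_norm_of_norm_le hm (hmle _ (.inr (heY.mapsTo trivial))) (by positivity)
      (hXY n)

end Matching

theorem stmt5 {d : ℕ} (X Y : Set (EuclideanSpace ℝ (Fin d)))
    (hX : SepNet X) (hY : SepNet Y)
    (h0X : (0 : EuclideanSpace ℝ (Fin d)) ∉ X)
    (h0Y : (0 : EuclideanSpace ℝ (Fin d)) ∉ Y) :
    ∃ f : EuclideanSpace ℝ (Fin d) → EuclideanSpace ℝ (Fin d),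
      Set.BijOn f X Y ∧ ∃ C > (0:ℝ),
        (∀ x ∈ X, dist (f x) x ≤ C * ‖x‖) ∧
        (∀ x ∈ X, dist (f x) x ≤ C * ‖f x‖) := by
  obtain ⟨⟨δX, hδX, hXsep⟩, θX, hXnet⟩ := hX
  obtain ⟨⟨δY, hδY, hYsep⟩, θY, hYnet⟩ := hY
  exact exists_bijOn_dist_le_mul_norm (lt_min hδX hδY)
    (fun x hx y hy hxy => (min_le_left _ _).trans (hXsep x hx y hy hxy))
    (fun x hx y hy hxy => (min_le_right _ _).trans (hYsep x hx y hy hxy))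
    (fun p => let ⟨x, hx, h⟩ := hXnet p; ⟨x, hx, h.trans (le_max_left θX θY)⟩)
    (fun p => let ⟨y, hy, h⟩ := hYnet p; ⟨y, hy, h.trans (le_max_right θX θY)⟩) h0X h0Y
end
end

section
/- Let X, Y be two separated nets in ℝ^d. Assume there is an unbounded increasing sequence (R_n) ⊂ (0,∞) such that the limit L := lim_{n→∞} |X ∩ B̄(0, R_n)| / |Y ∩ B̄(0, R_n)| exists with L ≠ 1. Then there is no bijection f : X → Y with disp_R(f) ∈ o(R). -/
open Filter Metric Set Topology MeasureTheory Module ENNReal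

noncomputable section

namespace SepNetAux

variable {d : ℕ}

lemma cball_vol' (r : ℝ) (hr : 0 ≤ r) :
    volume (closedBall (0 : EuclideanSpace ℝ (Fin d)) r) =
      ENNReal.ofReal (r ^ d) * volume (ball (0 : EuclideanSpace ℝ (Fin d)) 1) := by
  rw [Measure.addHaar_closedBall volume 0 hr, finrank_euclideanSpace_fin]

lemma pack_meas {S A : Set (EuclideanSpace ℝ (Fin d))} {δ : ℝ} (hδ : 0 < δ)
    (hsep : ∀ x ∈ S, ∀ y ∈ S, x ≠ y → δ ≤ dist x y)
    (hfin : S.Finite) (hsub : ∀ x ∈ S, closedBall x (δ/3) ⊆ A) :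
    (S.ncard : ℝ≥0∞) * volume (closedBall (0 : EuclideanSpace ℝ (Fin d)) (δ/3)) ≤ volume A := by
  classical
  have hdisj : (↑hfin.toFinset : Set (EuclideanSpace ℝ (Fin d))).PairwiseDisjoint
      (fun x => closedBall x (δ/3)) := by
    intro x hx y hy hxy
    refine closedBall_disjoint_closedBall ?_
    have := hsep x (hfin.mem_toFinset.1 hx) y (hfin.mem_toFinset.1 hy) hxy
    linarith
  calc (S.ncard : ℝ≥0∞) * volume (closedBall (0 : EuclideanSpace ℝ (Fin d)) (δ/3))
      = ∑ x ∈ hfin.toFinset, volume (closedBall x (δ/3)) := by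
        simp only [Measure.addHaar_closedBall_center volume, Finset.sum_const, nsmul_eq_mul]
        rw [Set.ncard_eq_toFinset_card S hfin]
    _ = volume (⋃ x ∈ hfin.toFinset, closedBall x (δ/3)) :=
        (measure_biUnion_finset hdisj (fun _ _ => measurableSet_closedBall)).symm
    _ ≤ volume A := by
        refine measure_mono ?_
        simp only [iUnion_subset_iff]
        intro x hx
        exact hsub x (hfin.mem_toFinset.1 hx)

lemma sep_finite {S : Set (EuclideanSpace ℝ (Fin d))} {δ : ℝ} (hδ : 0 < δ)
    (hsep : ∀ x ∈ S, ∀ y ∈ S, x ≠ y → δ ≤ dist x y) (R : ℝ) :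
    (S ∩ closedBall 0 R).Finite := by
  by_contra hinf
  have hinf : (S ∩ closedBall 0 R).Infinite := hinf
  set v := volume (closedBall (0 : EuclideanSpace ℝ (Fin d)) (δ/3)) with hv
  set V := volume (closedBall (0 : EuclideanSpace ℝ (Fin d)) (R + δ/3)) with hV
  have hv0 : v ≠ 0 := (measure_closedBall_pos volume _ (by linarith)).ne'
  have hVtop : V ≠ ⊤ := measure_closedBall_lt_top.ne
  obtain ⟨n, hn⟩ := ENNReal.exists_nat_gt (ENNReal.div_lt_top hVtop hv0).ne
  obtain ⟨T, hTsub, hTfin, hTcard⟩ := hinf.exists_subset_ncard_eq n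
  have hineq : (T.ncard : ℝ≥0∞) * v ≤ V := by
    refine pack_meas hδ (fun x hx y hy hxy => hsep x (hTsub hx).1 y (hTsub hy).1 hxy) hTfin ?_
    intro x hx z hz
    have hx' : dist x 0 ≤ R := (hTsub hx).2
    have : dist z 0 ≤ dist z x + dist x 0 := dist_triangle _ _ _
    simp only [mem_closedBall] at hz ⊢
    linarith
  rw [hTcard] at hineq
  have : (n : ℝ≥0∞) ≤ V / v := ENNReal.le_div_iff_mul_le (Or.inl hv0)
    (Or.inr hVtop) |>.2 hineq
  exact absurd hn (not_lt.2 this)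

lemma annulus_bound {Y : Set (EuclideanSpace ℝ (Fin d))} {δ a b : ℝ} (hδ : 0 < δ)
    (hsep : ∀ x ∈ Y, ∀ y ∈ Y, x ≠ y → δ ≤ dist x y)
    (hfin : (Y ∩ (closedBall 0 b \ closedBall 0 a)).Finite)
    (ha : δ/3 ≤ a) (hab : a ≤ b) :
    ((Y ∩ (closedBall 0 b \ closedBall 0 a)).ncard : ℝ) * (δ/3)^d ≤ (b + δ/3)^d - (a - δ/3)^d := by
  set κ := volume (ball (0 : EuclideanSpace ℝ (Fin d)) 1) with hκ
  have hκ0 : κ ≠ 0 := (measure_ball_pos volume _ one_pos).ne'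
  have hκtop : κ ≠ ⊤ := measure_ball_lt_top.ne
  set S := Y ∩ (closedBall 0 b \ closedBall 0 a) with hS
  set A := closedBall (0 : EuclideanSpace ℝ (Fin d)) (b + δ/3) \ closedBall 0 (a - δ/3) with hA
  have h3 : (0:ℝ) < δ/3 := by linarith
  have hsub : ∀ x ∈ S, closedBall x (δ/3) ⊆ A := by
    intro x hx z hz
    obtain ⟨hxY, hxb, hxa⟩ := hx
    simp only [mem_closedBall, mem_diff, not_le] at hz hxb hxa ⊢
    constructor
    · have := dist_triangle z x 0; simp only [mem_closedBall]; linarith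
    · simp only [mem_closedBall, not_le]
      have := dist_triangle x z 0
      have h := dist_comm z x
      linarith
  have hmeas := pack_meas hδ (fun x hx y hy hxy => hsep x hx.1 y hy.1 hxy) hfin hsub
  have hAvol : volume A ≤ ENNReal.ofReal ((b + δ/3)^d - (a - δ/3)^d) * κ := by
    rw [hA, measure_diff (closedBall_subset_closedBall (by linarith))
      measurableSet_closedBall.nullMeasurableSet measure_closedBall_lt_top.ne,
      cball_vol' _ (by linarith), cball_vol' _ (by linarith),
      ENNReal.ofReal_sub _ (pow_nonneg (by linarith) d), ENNReal.sub_mul (fun _ _ => hκtop)]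
  have key : (S.ncard : ℝ≥0∞) * ENNReal.ofReal ((δ/3)^d) ≤
      ENNReal.ofReal ((b + δ/3)^d - (a - δ/3)^d) := by
    have h1 : (S.ncard : ℝ≥0∞) * ENNReal.ofReal ((δ/3)^d) * κ ≤
        ENNReal.ofReal ((b + δ/3)^d - (a - δ/3)^d) * κ := by
      calc (S.ncard : ℝ≥0∞) * ENNReal.ofReal ((δ/3)^d) * κ
          = (S.ncard : ℝ≥0∞) * (ENNReal.ofReal ((δ/3)^d) * κ) := by ring
        _ = (S.ncard : ℝ≥0∞) * volume (closedBall (0 : EuclideanSpace ℝ (Fin d)) (δ/3)) := by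
            rw [cball_vol' _ h3.le]
        _ ≤ volume A := hmeas
        _ ≤ _ := hAvol
    exact (ENNReal.mul_le_mul_iff_left hκ0 hκtop).1 h1
  have hnn : (0:ℝ) ≤ (b + δ/3)^d - (a - δ/3)^d := by
    nlinarith [pow_le_pow_left₀ (by linarith : (0:ℝ) ≤ a - δ/3) (by linarith : a - δ/3 ≤ b + δ/3) d]
  refine (ENNReal.ofReal_le_ofReal_iff hnn).1 ?_
  rw [ENNReal.ofReal_mul (by positivity), ENNReal.ofReal_natCast]
  exact key

lemma net_lower {Y : Set (EuclideanSpace ℝ (Fin d))} {θ R : ℝ} (hθ : 0 < θ)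
    (hnet : ∀ p, ∃ y ∈ Y, dist p y ≤ θ)
    (hfin : (Y ∩ closedBall 0 R).Finite) (hR : θ ≤ R) :
    (R - θ)^d ≤ ((Y ∩ closedBall 0 R).ncard : ℝ) * θ^d := by
  classical
  set κ := volume (ball (0 : EuclideanSpace ℝ (Fin d)) 1) with hκ
  have hκ0 : κ ≠ 0 := (measure_ball_pos volume _ one_pos).ne'
  have hκtop : κ ≠ ⊤ := measure_ball_lt_top.ne
  have hcover : closedBall (0 : EuclideanSpace ℝ (Fin d)) (R - θ) ⊆
      ⋃ y ∈ hfin.toFinset, closedBall y θ := by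
    intro p hp
    obtain ⟨y, hyY, hpy⟩ := hnet p
    have hy0 : dist y 0 ≤ R := by
      have := dist_triangle y p 0
      have h := dist_comm p y
      simp only [mem_closedBall] at hp ⊢
      linarith
    exact mem_biUnion (hfin.mem_toFinset.2 ⟨hyY, mem_closedBall.2 hy0⟩)
      (mem_closedBall.2 (by rw [dist_comm] at hpy ⊢; exact hpy))
  have hvol : volume (closedBall (0 : EuclideanSpace ℝ (Fin d)) (R - θ)) ≤
      ((Y ∩ closedBall 0 R).ncard : ℝ≥0∞) * volume (closedBall (0 : EuclideanSpace ℝ (Fin d)) θ) := by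
    calc volume (closedBall (0 : EuclideanSpace ℝ (Fin d)) (R - θ))
        ≤ volume (⋃ y ∈ hfin.toFinset, closedBall y θ) := measure_mono hcover
      _ ≤ ∑ y ∈ hfin.toFinset, volume (closedBall y θ) := measure_biUnion_finset_le _ _
      _ = ((Y ∩ closedBall 0 R).ncard : ℝ≥0∞) * volume (closedBall (0 : EuclideanSpace ℝ (Fin d)) θ) := by
          simp only [Measure.addHaar_closedBall_center volume, Finset.sum_const, nsmul_eq_mul]
          rw [Set.ncard_eq_toFinset_card _ hfin]
  rw [cball_vol' _ (by linarith), cball_vol' _ hθ.le] at hvol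
  rw [← mul_assoc] at hvol
  have h1 : ENNReal.ofReal ((R-θ)^d) ≤ ((Y ∩ closedBall 0 R).ncard : ℝ≥0∞) * ENNReal.ofReal (θ^d) :=
    (ENNReal.mul_le_mul_iff_left hκ0 hκtop).1 hvol
  rw [← ENNReal.ofReal_natCast, ← ENNReal.ofReal_mul (by positivity)] at h1
  exact (ENNReal.ofReal_le_ofReal_iff (by positivity)).1 h1

lemma ann_convert {d : ℕ} {A ρ a b c₁ c₂ : ℝ}
    (h : A * ρ^d ≤ (b+ρ)^d - (a-ρ)^d)
    (h0 : 0 ≤ c₂) (h1 : c₂ ≤ a - ρ) (h2 : b + ρ ≤ c₁) (h3 : a - ρ ≤ b + ρ) :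
    A * ρ^d ≤ c₁^d - c₂^d := by
  have u1 : (b+ρ)^d ≤ c₁^d := pow_le_pow_left₀ (le_trans (le_trans h0 h1) h3) h2 d
  have u2 : c₂^d ≤ (a-ρ)^d := pow_le_pow_left₀ h0 h1 d
  linarith

lemma combine {d : ℕ} {A ρ eps r θ NY D : ℝ} (hρ : 0 < ρ) (h1ε : 0 < 1 - eps)
    (hD : 0 ≤ D) (hA : A * ρ^d ≤ D * r^d) (hNY : ((1-eps)*r)^d ≤ NY * θ^d) :
    A ≤ D * θ^d / (ρ^d * (1-eps)^d) * NY := by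
  rw [div_mul_eq_mul_div, le_div_iff₀ (by positivity)]
  have hA' := mul_le_mul_of_nonneg_right hA (pow_nonneg h1ε.le d)
  have h2' := mul_le_mul_of_nonneg_left hNY hD
  have e3 : ((1-eps)*r)^d = (1-eps)^d * r^d := mul_pow _ _ _
  rw [e3] at h2'
  linarith

end SepNetAux

theorem stmt8 {d : ℕ} (X Y : Set (EuclideanSpace ℝ (Fin d)))
    (hX : SepNet X) (hY : SepNet Y)
    (R : ℕ → ℝ) (hRmono : StrictMono R) (hRpos : ∀ n, 0 < R n)
    (hRtop : Tendsto R atTop atTop)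
    (L : ℝ)
    (hL : Tendsto (fun n =>
        ((X ∩ Metric.closedBall 0 (R n)).ncard : ℝ) /
        ((Y ∩ Metric.closedBall 0 (R n)).ncard : ℝ)) atTop (𝓝 L))
    (hL1 : L ≠ 1) :
    ¬ ∃ f : EuclideanSpace ℝ (Fin d) → EuclideanSpace ℝ (Fin d),
        Set.BijOn f X Y ∧ Tendsto (fun R => dispR X f R / R) atTop (𝓝 0) := by
  rintro ⟨f, hbij, hdisp⟩
  obtain ⟨⟨δX, hδX, hsepX⟩, -⟩ := hX
  obtain ⟨⟨δ, hδ, hsepY⟩, θ₀, hnet₀⟩ := hY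
  set θ := max θ₀ 1 with hθdef
  have hθ : (0:ℝ) < θ := lt_of_lt_of_le one_pos (le_max_right _ _)
  have hnet : ∀ p : EuclideanSpace ℝ (Fin d), ∃ y ∈ Y, dist p y ≤ θ := fun p => by
    obtain ⟨y, hy, h⟩ := hnet₀ p; exact ⟨y, hy, h.trans (le_max_left _ _)⟩
  have hfinX : ∀ r : ℝ, (X ∩ closedBall 0 r).Finite := SepNetAux.sep_finite hδX hsepX
  have hfinY : ∀ r : ℝ, (Y ∩ closedBall 0 r).Finite := SepNetAux.sep_finite hδ hsepY
  set F : ℝ → ℝ := fun ε => ((1+2*ε)^d - (1-2*ε)^d) * θ^d / ((δ/3)^d * (1-ε)^d) with hFdef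
  -- key quantitative claim
  have key : ∀ ε : ℝ, 0 < ε → ε ≤ 1/2 → |L - 1| ≤ F ε := by
    intro ε hε hε2
    have hε1 : ε < 1 := by linarith
    have h1ε : (0:ℝ) < 1 - ε := by linarith
    have h1 : ∀ᶠ r in atTop, dispR X f r / r < ε := hdisp.eventually_lt_const hε
    obtain ⟨r₀, hr₀⟩ := eventually_atTop.1 (h1.and (eventually_ge_atTop (1:ℝ)))
    have hdispAll : ∀ r' : ℝ, r₀ ≤ r' → dispR X f r' ≤ ε * r' := by
      intro r' h
      obtain ⟨hlt, h1r⟩ := hr₀ r' h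
      have hrpos : (0:ℝ) < r' := lt_of_lt_of_le one_pos h1r
      have := (div_lt_iff₀ hrpos).1 hlt
      linarith
    have hev : ∀ᶠ n in atTop,
        |((X ∩ closedBall 0 (R n)).ncard : ℝ) / ((Y ∩ closedBall 0 (R n)).ncard : ℝ) - 1|
          ≤ F ε := by
      filter_upwards [hRtop.eventually_ge_atTop (max r₀ (max ((δ/3)/ε) (θ/ε)))] with n hn
      set r := R n with hrdef
      have hr0 : (0:ℝ) < r := hRpos n
      have hrr₀ : r₀ ≤ r := le_trans (le_max_left _ _) hn
      have hρε : δ/3 ≤ ε * r := by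
        have h := le_trans (le_trans (le_max_left _ _) (le_max_right r₀ _)) hn
        have := (div_le_iff₀ hε).1 h
        linarith
      have hθε : θ ≤ ε * r := by
        have h := le_trans (le_trans (le_max_right _ _) (le_max_right r₀ _)) hn
        have := (div_le_iff₀ hε).1 h
        linarith
      have hεrpos : (0:ℝ) < ε * r := mul_pos hε hr0
      have hεr_le : ε * r ≤ r := by linarith [mul_pos h1ε hr0]
      have h12ε : (0:ℝ) ≤ (1-2*ε)*r := mul_nonneg (by linarith) hr0.le
      have hθr : θ ≤ r := le_trans hθε hεr_le
      -- displacement bound at radius r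
      have hdr : dispR X f r ≤ ε * r := hdispAll r hrr₀
      -- injection step
      have himg : f '' (X ∩ closedBall 0 r) ⊆ Y ∩ closedBall 0 ((1+ε)*r) := by
        rintro - ⟨x, hx, rfl⟩
        refine ⟨hbij.mapsTo hx.1, mem_closedBall.2 ?_⟩
        have hdx : dist (f x) x ≤ dispR X f r :=
          le_csSup ((hfinX r).image _).bddAbove (mem_image_of_mem _ hx)
        have h2 := dist_triangle (f x) x 0
        have hx0 : dist x 0 ≤ r := mem_closedBall.1 hx.2
        linarith [hdx, hdr, h2, hx0]
      have hNXle : (X ∩ closedBall 0 r).ncard ≤ (Y ∩ closedBall 0 ((1+ε)*r)).ncard := by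
        rw [← Set.ncard_image_of_injOn (hbij.injOn.mono inter_subset_left)]
        exact Set.ncard_le_ncard himg (hfinY _)
      -- surjection step
      have hsurj : Y ∩ closedBall 0 ((1-ε)*r) ⊆ f '' (X ∩ closedBall 0 r) := by
        rintro y ⟨hyY, hyb⟩
        obtain ⟨x, hxX, hfx⟩ := hbij.surjOn hyY
        refine ⟨x, ⟨hxX, mem_closedBall.2 ?_⟩, hfx⟩
        by_contra hxr
        push_neg at hxr
        have hs : r < dist x 0 := hxr
        have hdr' : dispR X f (dist x 0) ≤ ε * dist x 0 :=
          hdispAll _ (le_of_lt (lt_of_le_of_lt hrr₀ hs))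
        have h1' : dist (f x) x ≤ ε * dist x 0 := by
          refine le_trans (le_csSup ((hfinX (dist x 0)).image _).bddAbove ?_) hdr'
          exact mem_image_of_mem _ ⟨hxX, mem_closedBall.2 le_rfl⟩
        have htr := dist_triangle x (f x) 0
        have hcomm : dist x (f x) = dist (f x) x := dist_comm _ _
        have hy0 : dist (f x) 0 ≤ (1-ε)*r := by rw [hfx]; exact mem_closedBall.1 hyb
        have hkey : (0:ℝ) < (1-ε) * (dist x 0 - r) := mul_pos h1ε (by linarith)
        linarith [h1', htr, hcomm, hy0, hkey]
      have hNYmle : (Y ∩ closedBall 0 ((1-ε)*r)).ncard ≤ (X ∩ closedBall 0 r).ncard :=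
        le_trans (Set.ncard_le_ncard hsurj ((hfinX r).image f)) (Set.ncard_image_le (hfinX r))
      -- annuli
      have hfinAnn1 : (Y ∩ (closedBall 0 ((1+ε)*r) \ closedBall 0 r)).Finite :=
        (hfinY ((1+ε)*r)).subset (fun y hy => ⟨hy.1, hy.2.1⟩)
      have hfinAnn2 : (Y ∩ (closedBall 0 r \ closedBall 0 ((1-ε)*r))).Finite :=
        (hfinY r).subset (fun y hy => ⟨hy.1, hy.2.1⟩)
      have hsplit1 : (Y ∩ closedBall 0 ((1+ε)*r)).ncard ≤
          (Y ∩ closedBall 0 r).ncard + (Y ∩ (closedBall 0 ((1+ε)*r) \ closedBall 0 r)).ncard := by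
        refine le_trans (Set.ncard_le_ncard ?_ ((hfinY r).union hfinAnn1))
          (Set.ncard_union_le _ _)
        rintro y ⟨hyY, hyb⟩
        by_cases h : y ∈ closedBall (0 : EuclideanSpace ℝ (Fin d)) r
        · exact Or.inl ⟨hyY, h⟩
        · exact Or.inr ⟨hyY, hyb, h⟩
      have hsplit2 : (Y ∩ closedBall 0 r).ncard ≤
          (Y ∩ closedBall 0 ((1-ε)*r)).ncard +
            (Y ∩ (closedBall 0 r \ closedBall 0 ((1-ε)*r))).ncard := by
        refine le_trans (Set.ncard_le_ncard ?_ ((hfinY ((1-ε)*r)).union hfinAnn2))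
          (Set.ncard_union_le _ _)
        rintro y ⟨hyY, hyb⟩
        by_cases h : y ∈ closedBall (0 : EuclideanSpace ℝ (Fin d)) ((1-ε)*r)
        · exact Or.inl ⟨hyY, h⟩
        · exact Or.inr ⟨hyY, hyb, h⟩
      -- real abbreviations
      set NX := ((X ∩ closedBall 0 r).ncard : ℝ) with hNXdef
      set NY := ((Y ∩ closedBall 0 r).ncard : ℝ) with hNYdef
      set A1 := ((Y ∩ (closedBall 0 ((1+ε)*r) \ closedBall 0 r)).ncard : ℝ) with hA1def
      set A2 := ((Y ∩ (closedBall 0 r \ closedBall 0 ((1-ε)*r))).ncard : ℝ) with hA2def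
      have hNYpos : (0:ℝ) < NY := by
        have hne : (Y ∩ closedBall 0 r).Nonempty := by
          obtain ⟨y, hyY, hy⟩ := hnet 0
          have hy' : dist y 0 ≤ θ := by rw [dist_comm]; exact hy
          exact ⟨y, hyY, mem_closedBall.2 (hy'.trans hθr)⟩
        rw [hNYdef]
        exact_mod_cast (Set.ncard_pos (hfinY r)).2 hne
      have hupper : NX ≤ NY + A1 := by
        rw [hNXdef, hNYdef, hA1def]
        exact_mod_cast le_trans hNXle hsplit1
      have hlower : NY ≤ NX + A2 := by
        rw [hNXdef, hNYdef, hA2def]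
        exact_mod_cast le_trans hsplit2 (Nat.add_le_add_right hNYmle _)
      -- annulus counting bounds
      have hD : (0:ℝ) ≤ (1+2*ε)^d - (1-2*ε)^d := by
        have := pow_le_pow_left₀ (by linarith : (0:ℝ) ≤ 1-2*ε) (by linarith : 1-2*ε ≤ 1+2*ε) d
        linarith
      have hA1b : A1 * (δ/3)^d ≤ ((1+2*ε)^d - (1-2*ε)^d) * r^d := by
        have h := SepNetAux.annulus_bound hδ hsepY hfinAnn1
          (by linarith [hρε, hεr_le] : δ/3 ≤ r) (by linarith [hεrpos] : r ≤ (1+ε)*r)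
        rw [← hA1def] at h
        have step := SepNetAux.ann_convert (c₁ := (1+2*ε)*r) (c₂ := (1-2*ε)*r) h
          h12ε (by linarith) (by linarith) (by linarith)
        calc A1 * (δ/3)^d ≤ ((1+2*ε)*r)^d - ((1-2*ε)*r)^d := step
          _ = ((1+2*ε)^d - (1-2*ε)^d) * r^d := by rw [mul_pow, mul_pow]; ring
      have hA2b : A2 * (δ/3)^d ≤ ((1+2*ε)^d - (1-2*ε)^d) * r^d := by
        have h := SepNetAux.annulus_bound hδ hsepY hfinAnn2
          (by linarith [hρε, h12ε] : δ/3 ≤ (1-ε)*r) (by linarith [hεrpos] : (1-ε)*r ≤ r)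
        rw [← hA2def] at h
        have step := SepNetAux.ann_convert (c₁ := (1+2*ε)*r) (c₂ := (1-2*ε)*r) h
          h12ε (by linarith) (by linarith) (by linarith)
        calc A2 * (δ/3)^d ≤ ((1+2*ε)*r)^d - ((1-2*ε)*r)^d := step
          _ = ((1+2*ε)^d - (1-2*ε)^d) * r^d := by rw [mul_pow, mul_pow]; ring
      -- lower bound on NY
      have hNYl : ((1-ε)*r)^d ≤ NY * θ^d := by
        have h := SepNetAux.net_lower hθ hnet (hfinY r) hθr
        rw [← hNYdef] at h
        have : ((1-ε)*r)^d ≤ (r - θ)^d :=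
          pow_le_pow_left₀ (mul_nonneg h1ε.le hr0.le) (by linarith [hθε]) d
        exact le_trans this h
      -- combine : A_i ≤ F ε * NY
      have hFεeq : F ε = ((1+2*ε)^d - (1-2*ε)^d) * θ^d / ((δ/3)^d * (1-ε)^d) := rfl
      have hA1F : A1 ≤ F ε * NY := by
        rw [hFεeq]
        exact SepNetAux.combine (by linarith) h1ε hD hA1b hNYl
      have hA2F : A2 ≤ F ε * NY := by
        rw [hFεeq]
        exact SepNetAux.combine (by linarith) h1ε hD hA2b hNYl
      -- final ratio bound
      rw [abs_le]
      have hup : NX / NY ≤ 1 + F ε := by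
        rw [div_le_iff₀ hNYpos]
        have : (1 + F ε) * NY = NY + F ε * NY := by ring
        linarith [hupper, hA1F, this]
      have hlo : 1 - F ε ≤ NX / NY := by
        rw [le_div_iff₀ hNYpos]
        have : (1 - F ε) * NY = NY - F ε * NY := by ring
        linarith [hlower, hA2F, this]
      constructor
      · linarith [hlo]
      · linarith [hup]
    exact le_of_tendsto ((hL.sub_const 1).abs) hev
  -- conclude
  have hc : 0 < |L - 1| := abs_pos.2 (sub_ne_zero.2 hL1)
  have hF0 : F 0 = 0 := by
    rw [hFdef]
    norm_num
  have hFcont : ContinuousAt F 0 := by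
    rw [hFdef]
    refine ContinuousAt.div (by fun_prop) (by fun_prop) ?_
    show (δ/3)^d * ((1:ℝ)-0)^d ≠ 0
    simp only [sub_zero, one_pow, mul_one]
    positivity
  have hev0 : ∀ᶠ ε in 𝓝 (0:ℝ), F ε < |L - 1| := by
    have h := hFcont.tendsto
    rw [hF0] at h
    exact h.eventually_lt_const hc
  obtain ⟨η, hη, hball⟩ := Metric.eventually_nhds_iff.1 hev0
  have hεpos : 0 < min (η/2) (1/2 : ℝ) := lt_min (by linarith) (by norm_num)
  have hε2 : min (η/2) (1/2 : ℝ) ≤ 1/2 := min_le_right _ _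
  have hεη : dist (min (η/2) (1/2 : ℝ)) (0:ℝ) < η := by
    rw [Real.dist_eq, sub_zero, abs_of_pos hεpos]
    exact lt_of_le_of_lt (min_le_left _ _) (by linarith)
  exact absurd (key _ hεpos hε2) (not_le.2 (hball hεη))
end
end

section
/- Let X, Y be separated nets in ℝ^d whose natural densities α(X), α(Y) both exist and satisfy α(X) ≠ α(Y). Then there is no bijection f : X → Y with disp_R(f) ∈ o(R). -/
open Filter Metric Set Topology

noncomputable section

namespace Stmt9Aux

variable {d : ℕ}

/-- A separated set intersected with a closed ball is finite. -/
lemma finite_inter {X : Set (EuclideanSpace ℝ (Fin d))} {δ : ℝ} (hδ : 0 < δ)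
    (hsep : ∀ x ∈ X, ∀ y ∈ X, x ≠ y → δ ≤ dist x y) (R : ℝ) :
    (X ∩ Metric.closedBall 0 R).Finite := by
  classical
  obtain ⟨t, ht, hcov⟩ := totallyBounded_iff.mp
    (isCompact_closedBall (0 : EuclideanSpace ℝ (Fin d)) R).totallyBounded (δ/2) (by positivity)
  have hg : ∀ x ∈ X ∩ Metric.closedBall 0 R, ∃ y ∈ t, x ∈ ball y (δ/2) := by
    intro x hx
    simpa using hcov hx.2
  choose! g hg1 hg2 using hg
  refine Set.Finite.of_finite_image (f := g) (ht.subset ?_) ?_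
  · rintro _ ⟨x, hx, rfl⟩; exact hg1 x hx
  · intro x hx x' hx' hxy
    by_contra hne
    have h1 : dist x (g x) < δ/2 := mem_ball.mp (hg2 x hx)
    have h2 : dist x' (g x') < δ/2 := mem_ball.mp (hg2 x' hx')
    have h3 : δ ≤ dist x x' := hsep x hx.1 x' hx'.1 hne
    have h4 : dist x x' ≤ dist x (g x) + dist x' (g x') := by
      rw [hxy]
      calc dist x x' ≤ dist x (g x') + dist (g x') x' := dist_triangle _ _ _
        _ = dist x (g x') + dist x' (g x') := by rw [dist_comm (g x') x']
    linarith

lemma dist_le_dispR {X : Set (EuclideanSpace ℝ (Fin d))} {δ : ℝ} (hδ : 0 < δ)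
    (hsep : ∀ x ∈ X, ∀ y ∈ X, x ≠ y → δ ≤ dist x y)
    (f : EuclideanSpace ℝ (Fin d) → EuclideanSpace ℝ (Fin d))
    {x : EuclideanSpace ℝ (Fin d)} (hx : x ∈ X) {R : ℝ} (hxR : x ∈ Metric.closedBall 0 R) :
    dist (f x) x ≤ dispR X f R := by
  have hfin : ((fun x => dist (f x) x) '' (X ∩ Metric.closedBall 0 R)).Finite :=
    (finite_inter hδ hsep R).image _
  exact le_csSup hfin.bddAbove ⟨x, ⟨hx, hxR⟩, rfl⟩

/-- Key density comparison: eventual cardinality comparison gives comparison of densities. -/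
lemma density_le {S T : Set (EuclideanSpace ℝ (Fin d))} {a b : ℝ}
    (hA : ∀ ε : ℝ, 0 < ε → ∀ᶠ R in atTop,
      ((S ∩ Metric.closedBall 0 R).ncard : ℝ) ≤ ((T ∩ Metric.closedBall 0 ((1+ε)*R)).ncard : ℝ))
    (hS : Tendsto (fun R : ℝ =>
        ((S ∩ Metric.closedBall 0 R).ncard : ℝ) /
        (MeasureTheory.volume (Metric.closedBall (0 : EuclideanSpace ℝ (Fin d)) R)).toReal)
        atTop (𝓝 a))
    (hT : Tendsto (fun R : ℝ =>
        ((T ∩ Metric.closedBall 0 R).ncard : ℝ) /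
        (MeasureTheory.volume (Metric.closedBall (0 : EuclideanSpace ℝ (Fin d)) R)).toReal)
        atTop (𝓝 b)) : a ≤ b := by
  have key : ∀ ε : ℝ, 0 < ε → a ≤ (1+ε)^d * b := by
    intro ε hε
    have h1ε : (0:ℝ) < 1 + ε := by linarith
    set v : ℝ → ℝ := fun R =>
      (MeasureTheory.volume (Metric.closedBall (0 : EuclideanSpace ℝ (Fin d)) R)).toReal with hv
    have hvol : ∀ R : ℝ, 0 ≤ R → v ((1+ε)*R) = (1+ε)^d * v R := by
      intro R hR
      have e1 := MeasureTheory.Measure.addHaar_closedBall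
        (MeasureTheory.volume) (0 : EuclideanSpace ℝ (Fin d)) (r := R) hR
      have e2 := MeasureTheory.Measure.addHaar_closedBall
        (MeasureTheory.volume) (0 : EuclideanSpace ℝ (Fin d)) (r := (1+ε)*R)
        (by positivity)
      rw [finrank_euclideanSpace_fin] at e1 e2
      have hlt : MeasureTheory.volume (ball (0 : EuclideanSpace ℝ (Fin d)) 1) ≠ ⊤ :=
        (MeasureTheory.measure_ball_lt_top).ne
      simp only [hv, e1, e2, mul_pow]
      rw [ENNReal.toReal_mul, ENNReal.toReal_mul, ENNReal.toReal_ofReal (by positivity),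
        ENNReal.toReal_ofReal (by positivity), mul_assoc]
    -- the scaled density for T tends to (1+ε)^d * b
    have hTlim : Tendsto (fun R : ℝ =>
        (1+ε)^d * (((T ∩ Metric.closedBall 0 ((1+ε)*R)).ncard : ℝ) / v ((1+ε)*R)))
        atTop (𝓝 ((1+ε)^d * b)) := by
      refine Tendsto.const_mul _ (hT.comp ?_)
      exact tendsto_id.const_mul_atTop h1ε
    have hSlim : Tendsto (fun R : ℝ => ((S ∩ Metric.closedBall 0 R).ncard : ℝ) / v R)
        atTop (𝓝 a) := hS
    refine le_of_tendsto_of_tendsto hSlim hTlim ?_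
    filter_upwards [hA ε hε, eventually_ge_atTop (1:ℝ)] with R hR hR1
    have hR0 : (0:ℝ) < R := by linarith
    have hvpos : 0 < v R := by
      refine ENNReal.toReal_pos ?_ (MeasureTheory.measure_closedBall_lt_top).ne
      exact (measure_closedBall_pos MeasureTheory.volume _ hR0).ne'
    have hc : (0:ℝ) < (1+ε)^d := by positivity
    rw [hvol R hR0.le, mul_div_assoc', mul_div_mul_left _ _ hc.ne']
    gcongr
  -- let ε → 0
  have hlim : Tendsto (fun ε : ℝ => (1+ε)^d * b) (𝓝[>] (0:ℝ)) (𝓝 b) := by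
    have : Tendsto (fun ε : ℝ => (1+ε)^d * b) (𝓝 (0:ℝ)) (𝓝 ((1+0)^d * b)) := by
      exact (((continuous_const.add continuous_id).pow d).mul continuous_const).tendsto 0
    simpa using this.mono_left nhdsWithin_le_nhds
  exact ge_of_tendsto hlim (eventually_nhdsWithin_of_forall fun ε hε => key ε hε)

end Stmt9Aux

theorem stmt9 {d : ℕ} (X Y : Set (EuclideanSpace ℝ (Fin d)))
    (hX : SepNet X) (hY : SepNet Y)
    (aX aY : ℝ)
    (hαX : Tendsto (fun R : ℝ =>
        ((X ∩ Metric.closedBall 0 R).ncard : ℝ) /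
        (MeasureTheory.volume (Metric.closedBall (0 : EuclideanSpace ℝ (Fin d)) R)).toReal)
        atTop (𝓝 aX))
    (hαY : Tendsto (fun R : ℝ =>
        ((Y ∩ Metric.closedBall 0 R).ncard : ℝ) /
        (MeasureTheory.volume (Metric.closedBall (0 : EuclideanSpace ℝ (Fin d)) R)).toReal)
        atTop (𝓝 aY))
    (hne : aX ≠ aY) :
    ¬ ∃ f : EuclideanSpace ℝ (Fin d) → EuclideanSpace ℝ (Fin d),
        Set.BijOn f X Y ∧ Tendsto (fun R => dispR X f R / R) atTop (𝓝 0) := by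
  rintro ⟨f, hbij, hdisp⟩
  obtain ⟨⟨δX, hδX, hsepX⟩, -⟩ := hX
  obtain ⟨⟨δY, hδY, hsepY⟩, -⟩ := hY
  -- eventual linear bound on displacement
  have hbound : ∀ ε' : ℝ, 0 < ε' → ∃ R₀ : ℝ, 1 ≤ R₀ ∧
      ∀ r : ℝ, R₀ ≤ r → dispR X f r ≤ ε' * r := by
    intro ε' hε'
    have := (hdisp.eventually (eventually_le_nhds (show (0:ℝ) < ε' from hε'))).and
      (eventually_ge_atTop (1:ℝ))
    obtain ⟨R₀, hR₀⟩ := this.exists_forall_of_atTop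
    refine ⟨max R₀ 1, le_max_right _ _, fun r hr => ?_⟩
    have h1 : dispR X f r / r ≤ ε' := (hR₀ r (le_trans (le_max_left _ _) hr)).1
    have hrpos : (0:ℝ) < r := lt_of_lt_of_le zero_lt_one (le_trans (le_max_right _ _) hr)
    calc dispR X f r = (dispR X f r / r) * r := by field_simp
      _ ≤ ε' * r := mul_le_mul_of_nonneg_right h1 hrpos.le
  -- direction A : X-count ≤ Y-count
  have hA : ∀ ε : ℝ, 0 < ε → ∀ᶠ R in atTop,
      ((X ∩ Metric.closedBall 0 R).ncard : ℝ) ≤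
      ((Y ∩ Metric.closedBall 0 ((1+ε)*R)).ncard : ℝ) := by
    intro ε hε
    obtain ⟨R₀, hR₀1, hR₀⟩ := hbound ε hε
    filter_upwards [eventually_ge_atTop R₀] with R hR
    have hRpos : (0:ℝ) < R := lt_of_lt_of_le zero_lt_one (le_trans hR₀1 hR)
    have hsub : f '' (X ∩ Metric.closedBall 0 R) ⊆ Y ∩ Metric.closedBall 0 ((1+ε)*R) := by
      rintro _ ⟨x, ⟨hxX, hxB⟩, rfl⟩
      refine ⟨hbij.mapsTo hxX, ?_⟩
      have hd : dist (f x) x ≤ dispR X f R := Stmt9Aux.dist_le_dispR hδX hsepX f hxX hxB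
      have hx0 : dist x 0 ≤ R := mem_closedBall.mp hxB
      have : dist (f x) 0 ≤ dist (f x) x + dist x 0 := dist_triangle _ _ _
      have hdR : dispR X f R ≤ ε * R := hR₀ R hR
      simp only [mem_closedBall]
      nlinarith
    have hfin : (Y ∩ Metric.closedBall 0 ((1+ε)*R)).Finite :=
      Stmt9Aux.finite_inter hδY hsepY _
    have h1 : (X ∩ Metric.closedBall 0 R).ncard = (f '' (X ∩ Metric.closedBall 0 R)).ncard :=
      (Set.ncard_image_of_injOn (hbij.injOn.mono inter_subset_left)).symm
    have h2 : (f '' (X ∩ Metric.closedBall 0 R)).ncard ≤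
        (Y ∩ Metric.closedBall 0 ((1+ε)*R)).ncard :=
      Set.ncard_le_ncard hsub hfin
    exact_mod_cast h1 ▸ h2
  -- direction B : Y-count ≤ X-count
  have hB : ∀ ε : ℝ, 0 < ε → ∀ᶠ R in atTop,
      ((Y ∩ Metric.closedBall 0 R).ncard : ℝ) ≤
      ((X ∩ Metric.closedBall 0 ((1+ε)*R)).ncard : ℝ) := by
    intro ε hε
    have h1ε : (0:ℝ) < 1 + ε := by linarith
    set ε' : ℝ := ε / (1+ε) with hε'def
    have hε' : 0 < ε' := by positivity
    have hεε : ε' * (1+ε) = ε := div_mul_cancel₀ _ h1ε.ne'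
    obtain ⟨R₀, hR₀1, hR₀⟩ := hbound ε' hε'
    set g := Function.invFunOn f X with hg
    have hgX : ∀ y ∈ Y, g y ∈ X ∧ f (g y) = y := by
      intro y hy
      obtain ⟨x, hx, hfx⟩ := hbij.surjOn hy
      exact ⟨Function.invFunOn_mem ⟨x, hx, hfx⟩, Function.invFunOn_eq ⟨x, hx, hfx⟩⟩
    filter_upwards [eventually_ge_atTop R₀] with R hR
    have hRpos : (0:ℝ) < R := lt_of_lt_of_le zero_lt_one (le_trans hR₀1 hR)
    have hsub : g '' (Y ∩ Metric.closedBall 0 R) ⊆ X ∩ Metric.closedBall 0 ((1+ε)*R) := by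
      rintro _ ⟨y, ⟨hyY, hyB⟩, rfl⟩
      obtain ⟨hgy, hfgy⟩ := hgX y hyY
      refine ⟨hgy, ?_⟩
      set x := g y
      simp only [mem_closedBall]
      rcases le_or_gt (dist x 0) R with hcase | hcase
      · nlinarith
      · -- then ‖x‖ > R ≥ R₀
        have hxB : x ∈ Metric.closedBall 0 (dist x 0) := mem_closedBall.mpr le_rfl
        have hd : dist (f x) x ≤ dispR X f (dist x 0) :=
          Stmt9Aux.dist_le_dispR hδX hsepX f hgy hxB
        have hdb : dispR X f (dist x 0) ≤ ε' * dist x 0 :=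
          hR₀ _ (le_trans hR hcase.le)
        have htri : dist x 0 ≤ dist x (f x) + dist (f x) 0 := dist_triangle _ _ _
        have hy0 : dist (f x) 0 ≤ R := by rw [hfgy]; exact mem_closedBall.mp hyB
        rw [dist_comm x (f x)] at htri
        -- dist x 0 ≤ R + ε' * dist x 0 ; multiply by (1+ε)
        have hkey : dist x 0 ≤ R + ε' * dist x 0 := by linarith
        nlinarith [mul_le_mul_of_nonneg_left hkey h1ε.le]
    have hfin : (X ∩ Metric.closedBall 0 ((1+ε)*R)).Finite :=
      Stmt9Aux.finite_inter hδX hsepX _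
    have hinj : Set.InjOn g (Y ∩ Metric.closedBall 0 R) := by
      intro y₁ hy₁ y₂ hy₂ hgy
      have h1 := (hgX y₁ hy₁.1).2
      have h2 := (hgX y₂ hy₂.1).2
      rw [← h1, ← h2, hgy]
    have h1 : (Y ∩ Metric.closedBall 0 R).ncard = (g '' (Y ∩ Metric.closedBall 0 R)).ncard :=
      (Set.ncard_image_of_injOn hinj).symm
    have h2 : (g '' (Y ∩ Metric.closedBall 0 R)).ncard ≤
        (X ∩ Metric.closedBall 0 ((1+ε)*R)).ncard :=
      Set.ncard_le_ncard hsub hfin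
    exact_mod_cast h1 ▸ h2
  have hle1 : aX ≤ aY := Stmt9Aux.density_le hA hαX hαY
  have hle2 : aY ≤ aX := Stmt9Aux.density_le hB hαY hαX
  exact hne (le_antisymm hle1 hle2)
end
end

section
/- For any separated net X ⊆ ℝ^d (d ≥ 1), X is not bounded-displacement equivalent to 2X := {2x : x ∈ X}; that is, every bijection f : X → 2X satisfies sup_{x∈X} ‖f(x) − x‖ = ∞. -/
open Filter Metric Set Topology

noncomputable section

/-- A separated set intersected with a ball is finite. -/
lemma sep_finite {d : ℕ} {S : Set (EuclideanSpace ℝ (Fin d))} {δ R : ℝ} (hδ : 0 < δ)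
    (hsep : ∀ x ∈ S, ∀ y ∈ S, x ≠ y → δ ≤ dist x y)
    (hb : S ⊆ Metric.closedBall 0 R) : S.Finite := by
  have hK : IsCompact (Metric.closedBall (0 : EuclideanSpace ℝ (Fin d)) R) :=
    isCompact_closedBall _ _
  obtain ⟨t, ht⟩ := hK.elim_finite_subcover
    (fun p : EuclideanSpace ℝ (Fin d) => Metric.ball p (δ/2))
    (fun p => isOpen_ball) (fun x hx => by
      simp only [Set.mem_iUnion]
      exact ⟨x, Metric.mem_ball_self (by linarith)⟩)
  have key : ∀ x ∈ S, ∃ p ∈ t, x ∈ Metric.ball p (δ/2) := by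
    intro x hx
    have := ht (hb hx)
    simpa using this
  choose g hg1 hg2 using key
  classical
  set F : EuclideanSpace ℝ (Fin d) → EuclideanSpace ℝ (Fin d) :=
    fun x => if h : x ∈ S then g x h else 0 with hF
  have hinj : Set.InjOn F S := by
    intro x hx y hy h
    simp only [hF, dif_pos hx, dif_pos hy] at h
    by_contra hne
    have h1 := hg2 x hx
    have h2 := hg2 y hy
    rw [h] at h1
    rw [Metric.mem_ball] at h1 h2
    have : dist x y < δ := by
      calc dist x y ≤ dist x (g y hy) + dist (g y hy) y := dist_triangle _ _ _
      _ < δ/2 + δ/2 := by rw [dist_comm (g y hy) y]; linarith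
      _ = δ := by ring
    linarith [hsep x hx y hy hne]
  have himg : F '' S ⊆ ↑t := by
    rintro _ ⟨x, hx, rfl⟩
    simp only [hF, dif_pos hx]
    exact hg1 x hx
  exact Set.Finite.of_finite_image (t.finite_toSet.subset himg) hinj

theorem stmt10 {d : ℕ} (hd : 1 ≤ d)
    (X : Set (EuclideanSpace ℝ (Fin d))) (hX : SepNet X)
    (f : EuclideanSpace ℝ (Fin d) → EuclideanSpace ℝ (Fin d))
    (hf : Set.BijOn f X ((fun x => (2:ℝ) • x) '' X)) :
    ¬ ∃ C : ℝ, ∀ x ∈ X, dist (f x) x ≤ C := by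
  obtain ⟨⟨δ, hδ, hsep⟩, ⟨θ, hnet⟩⟩ := hX
  rintro ⟨C, hC⟩
  -- θ ≥ 0 and C ≥ 0
  obtain ⟨x₀, hx₀X, hx₀⟩ := hnet 0
  have hθ : 0 ≤ θ := le_trans dist_nonneg hx₀
  have hC0 : 0 ≤ C := le_trans dist_nonneg (hC x₀ hx₀X)
  -- counting function
  set N : ℝ → ℕ := fun R => (X ∩ Metric.closedBall 0 R).ncard with hN
  have hfin : ∀ R : ℝ, (X ∩ Metric.closedBall 0 R).Finite := fun R =>
    sep_finite hδ (fun x hx y hy => hsep x hx.1 y hy.1) Set.inter_subset_right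
  have hmono : ∀ {R R' : ℝ}, R ≤ R' → N R ≤ N R' := by
    intro R R' h
    exact Set.ncard_le_ncard
      (Set.inter_subset_inter_right _ (Metric.closedBall_subset_closedBall h)) (hfin R')
  -- key step: N R ≤ N ((R+C)/2)
  have hstep : ∀ R : ℝ, N R ≤ N ((R + C) / 2) := by
    intro R
    set g : EuclideanSpace ℝ (Fin d) → EuclideanSpace ℝ (Fin d) :=
      fun x => (2:ℝ)⁻¹ • f x with hg
    have hginj : Set.InjOn g (X ∩ Metric.closedBall 0 R) := by
      intro x hx y hy h
      apply hf.injOn hx.1 hy.1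
      have : ((2:ℝ) • (2:ℝ)⁻¹) • f x = ((2:ℝ) • (2:ℝ)⁻¹) • f y := by
        rw [smul_assoc, smul_assoc]
        simp only [hg] at h
        rw [h]
      simpa using this
    have hgmaps : g '' (X ∩ Metric.closedBall 0 R) ⊆ X ∩ Metric.closedBall 0 ((R + C)/2) := by
      rintro _ ⟨x, ⟨hxX, hxB⟩, rfl⟩
      obtain ⟨y, hyX, hy⟩ := hf.mapsTo hxX
      have hgx : g x = y := by
        simp only [hg, ← hy]
        rw [smul_smul]
        norm_num
      have hnorm : dist (f x) 0 ≤ R + C := by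
        calc dist (f x) 0 ≤ dist (f x) x + dist x 0 := dist_triangle _ _ _
        _ ≤ C + R := add_le_add (hC x hxX) (Metric.mem_closedBall.mp hxB)
        _ = R + C := by ring
      refine ⟨hgx ▸ hyX, ?_⟩
      rw [Metric.mem_closedBall]
      have : dist (g x) 0 = (2:ℝ)⁻¹ * dist (f x) 0 := by
        simp only [hg, dist_zero_right, norm_smul]
        norm_num
      rw [this]
      linarith
    calc N R = (g '' (X ∩ Metric.closedBall 0 R)).ncard := (Set.ncard_image_of_injOn hginj).symm
    _ ≤ N ((R + C)/2) := Set.ncard_le_ncard hgmaps (hfin _)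
  -- iterate: N R ≤ N (C + 1) for all R
  have hiter : ∀ n : ℕ, ∀ R : ℝ, R ≤ C + 1 + n → N R ≤ N (C + 1) := by
    intro n
    induction n with
    | zero => intro R hR; exact hmono (by simpa using hR)
    | succ n ih =>
      intro R hR
      rcases le_or_gt R (C + 1) with h | h
      · exact hmono h
      · calc N R ≤ N ((R + C)/2) := hstep R
        _ ≤ N (C + 1) := by
            apply ih
            push_cast at hR ⊢
            linarith
  have hbound : ∀ R : ℝ, N R ≤ N (C + 1) := by
    intro R
    obtain ⟨n, hn⟩ := exists_nat_ge (R - (C + 1))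
    exact hiter n R (by linarith)
  -- X is infinite
  have hXinf : X.Infinite := by
    intro hXfin
    obtain ⟨M, hM⟩ := hXfin.isBounded.subset_closedBall 0
    set M' := max M 0 with hM'
    have hM'sub : X ⊆ Metric.closedBall 0 M' :=
      hM.trans (Metric.closedBall_subset_closedBall (le_max_left _ _))
    set i : Fin d := ⟨0, hd⟩ with hi
    set p : EuclideanSpace ℝ (Fin d) := EuclideanSpace.single i (M' + θ + 1) with hp
    obtain ⟨x, hxX, hx⟩ := hnet p
    have hpn : ‖p‖ = M' + θ + 1 := by
      rw [hp, EuclideanSpace.norm_single, Real.norm_of_nonneg (by positivity)]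
    have h1 : dist p 0 ≤ dist p x + dist x 0 := dist_triangle _ _ _
    have h2 : dist x 0 ≤ M' := Metric.mem_closedBall.mp (hM'sub hxX)
    rw [dist_zero_right, hpn] at h1
    linarith
  -- contradiction
  obtain ⟨T, hTX, hTcard⟩ := hXinf.exists_subset_card_eq (N (C + 1) + 1)
  have hTB : ∃ M : ℝ, ↑T ⊆ Metric.closedBall (0 : EuclideanSpace ℝ (Fin d)) M := by
    obtain ⟨M, hM⟩ := T.finite_toSet.isBounded.subset_closedBall 0
    exact ⟨M, hM⟩
  obtain ⟨M, hM⟩ := hTB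
  have hsub : ↑T ⊆ X ∩ Metric.closedBall 0 M := Set.subset_inter hTX hM
  have : N (C + 1) + 1 ≤ N M := by
    rw [← hTcard, ← Set.ncard_coe_finset]
    exact Set.ncard_le_ncard hsub (hfin M)
  linarith [hbound M]
end
end

section
/- For every increasing function ζ : (0,∞) → (0,∞) there exist separated nets X, Y ⊆ ℝ and a bijection f : X → Y such that disp_R(f) ∈ O(R) but disp_R(f⁻¹) ∉ O(ζ(R)). -/
open Filter Metric Set Topology

noncomputable section

/-- A separated net in `ℝ`. -/
def SepNetR (X : Set ℝ) : Prop :=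
  (∃ δ > 0, ∀ x ∈ X, ∀ y ∈ X, x ≠ y → δ ≤ |x - y|) ∧
  (∃ θ : ℝ, ∀ p : ℝ, ∃ x ∈ X, |p - x| ≤ θ)

/-- Displacement of `f` restricted to points of `X` of absolute value at most `R`. -/
def dispR1 (X : Set ℝ) (f : ℝ → ℝ) (R : ℝ) : ℝ :=
  sSup ((fun x => |f x - x|) '' (X ∩ Set.Icc (-R) R))

namespace Stmt12Aux
variable (ζ : ℝ → ℝ)

noncomputable def psi : ℕ → ℝ
  | 0 => 1/2
  | n + 1 => psi n + (max 1 ⌈((n : ℝ) + 1) * ζ (psi n)⌉₊ : ℕ)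

lemma psi_succ (n : ℕ) :
    psi ζ (n + 1) = psi ζ n + (max 1 ⌈((n : ℝ) + 1) * ζ (psi ζ n)⌉₊ : ℕ) := rfl

lemma psi_half (n : ℕ) : ∃ k : ℕ, psi ζ n = 1/2 + k := by
  induction n with
  | zero => exact ⟨0, by simp [psi]⟩
  | succ n ih =>
    obtain ⟨k, hk⟩ := ih
    refine ⟨k + max 1 ⌈((n : ℝ) + 1) * ζ (psi ζ n)⌉₊, ?_⟩
    rw [psi_succ, hk]; push_cast; ring

lemma one_le_step (n : ℕ) : psi ζ n + 1 ≤ psi ζ (n + 1) := by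
  rw [psi_succ]
  have : (1 : ℝ) ≤ (max 1 ⌈((n : ℝ) + 1) * ζ (psi ζ n)⌉₊ : ℕ) := by
    exact_mod_cast le_max_left 1 _
  linarith

lemma psi_strictMono : StrictMono (psi ζ) :=
  strictMono_nat_of_lt_succ fun n => by have := one_le_step ζ n; linarith

lemma psi_ge (n : ℕ) : (n : ℝ) + 1/2 ≤ psi ζ n := by
  induction n with
  | zero => simp [psi]
  | succ n ih => have := one_le_step ζ n; push_cast; linarith

lemma psi_pos (n : ℕ) : 0 < psi ζ n := by
  have h1 := psi_ge ζ n
  have h2 : (0:ℝ) ≤ (n:ℝ) := Nat.cast_nonneg n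
  linarith

lemma psi_gap_sep {a b : ℕ} (h : a < b) : psi ζ a + 1 ≤ psi ζ b :=
  le_trans (one_le_step ζ a) ((psi_strictMono ζ).monotone h)

lemma psi_gap (n : ℕ) : ((n : ℝ) + 1) * ζ (psi ζ n) ≤ psi ζ (n + 1) - psi ζ n := by
  rw [psi_succ]
  have h1 : ((n : ℝ) + 1) * ζ (psi ζ n) ≤ (⌈((n : ℝ) + 1) * ζ (psi ζ n)⌉₊ : ℝ) :=
    Nat.le_ceil _
  have h2 : ((⌈((n : ℝ) + 1) * ζ (psi ζ n)⌉₊ : ℕ) : ℝ)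
      ≤ ((max 1 ⌈((n : ℝ) + 1) * ζ (psi ζ n)⌉₊ : ℕ) : ℝ) := by
    exact_mod_cast le_max_right 1 _
  linarith

lemma half_le_abs (j : ℤ) : (1:ℝ)/2 ≤ |(j : ℝ) - 1/2| := by
  rcases le_or_gt j 0 with h | h
  · have hj : (j:ℝ) ≤ 0 := by exact_mod_cast h
    rw [abs_sub_comm, abs_of_nonneg (by linarith)]; linarith
  · have hj : (1:ℝ) ≤ j := by exact_mod_cast h
    rw [abs_of_nonneg (by linarith)]; linarith

lemma half_le_int_sub_psi (j : ℤ) (n : ℕ) : (1:ℝ)/2 ≤ |(j : ℝ) - psi ζ n| := by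
  obtain ⟨k, hk⟩ := psi_half ζ n
  have h := half_le_abs (j - k)
  rw [hk]
  have : (j:ℝ) - (1/2 + k) = ((j - (k:ℤ) : ℤ) : ℝ) - 1/2 := by push_cast; ring
  rw [this]; exact h

lemma psi_ne_int (j : ℤ) (n : ℕ) : (j : ℝ) ≠ psi ζ n := by
  intro h
  have h2 := half_le_int_sub_psi ζ j n
  rw [h] at h2; simp at h2; linarith

/-- The set X. -/
def XS : Set ℝ := {x | ∃ k : ℤ, x = 2 * k} ∪ {x | ∃ n : ℕ, x = psi ζ (n + 1)}

/-- The set Y. -/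
def YS : Set ℝ := {x | ∃ k : ℤ, x = k} ∪ {x | ∃ n : ℕ, x = psi ζ n}

open Classical in
/-- The bijection. -/
def ff (x : ℝ) : ℝ := if h : ∃ n : ℕ, psi ζ (n + 1) = x then psi ζ h.choose else x / 2

lemma ff_psi (n : ℕ) : ff ζ (psi ζ (n + 1)) = psi ζ n := by
  have h : ∃ m : ℕ, psi ζ (m + 1) = psi ζ (n + 1) := ⟨n, rfl⟩
  have hc : h.choose = n := by
    have := h.choose_spec
    have := (psi_strictMono ζ).injective this
    omega
  simp only [ff]; rw [dif_pos h, hc]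

lemma ff_int (k : ℤ) : ff ζ (2 * (k : ℝ)) = k := by
  have h : ¬ ∃ n : ℕ, psi ζ (n + 1) = 2 * (k : ℝ) := by
    rintro ⟨n, hn⟩
    exact psi_ne_int ζ (2 * k) (n + 1) (by push_cast; linarith)
  simp only [ff]; rw [dif_neg h]; ring

lemma ff_injOn : Set.InjOn (ff ζ) (XS ζ) := by
  rintro x (⟨k, rfl⟩ | ⟨n, rfl⟩) y (⟨k', rfl⟩ | ⟨n', rfl⟩) h
  · rw [ff_int, ff_int] at h
    norm_cast at h ⊢
    rw [h]
  · rw [ff_int, ff_psi] at h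
    exact absurd h (psi_ne_int ζ k n')
  · rw [ff_int, ff_psi] at h
    exact absurd h.symm (psi_ne_int ζ k' n)
  · rw [ff_psi, ff_psi] at h
    have := (psi_strictMono ζ).injective h
    rw [this]

lemma ff_bijOn : Set.BijOn (ff ζ) (XS ζ) (YS ζ) := by
  refine ⟨?_, ff_injOn ζ, ?_⟩
  · rintro x (⟨k, rfl⟩ | ⟨n, rfl⟩)
    · rw [ff_int]; exact Or.inl ⟨k, rfl⟩
    · rw [ff_psi]; exact Or.inr ⟨n, rfl⟩
  · rintro y (⟨k, rfl⟩ | ⟨n, rfl⟩)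
    · exact ⟨2 * k, Or.inl ⟨k, by push_cast; ring⟩, by rw [ff_int]⟩
    · exact ⟨psi ζ (n + 1), Or.inr ⟨n, rfl⟩, ff_psi ζ n⟩


lemma one_le_psi_sub {a b : ℕ} (h : a ≠ b) : 1 ≤ |psi ζ a - psi ζ b| := by
  rcases lt_or_gt_of_ne h with h | h
  · have := psi_gap_sep ζ h
    rw [abs_sub_comm, abs_of_nonneg (by linarith)]; linarith
  · have := psi_gap_sep ζ h
    rw [abs_of_nonneg (by linarith)]; linarith

lemma sepNet_X : SepNetR (XS ζ) := by
  constructor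
  · refine ⟨1/2, by norm_num, ?_⟩
    rintro x (⟨k, rfl⟩ | ⟨n, rfl⟩) y (⟨k', rfl⟩ | ⟨n', rfl⟩) hne
    · have hk : k ≠ k' := by rintro rfl; exact hne rfl
      have h1 : (1:ℝ) ≤ |(k:ℝ) - k'| := by exact_mod_cast Int.one_le_abs (sub_ne_zero.mpr hk)
      have : |2*(k:ℝ) - 2*k'| = 2 * |(k:ℝ) - k'| := by
        rw [show 2*(k:ℝ) - 2*k' = 2*((k:ℝ)-k') by ring, abs_mul, abs_two]
      rw [this]; linarith
    · have := half_le_int_sub_psi ζ (2*k) (n' + 1)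
      push_cast at this; linarith
    · have := half_le_int_sub_psi ζ (2*k') (n + 1)
      rw [abs_sub_comm]; push_cast at this; linarith
    · have : n + 1 ≠ n' + 1 := by
        rintro h; exact hne (by rw [h])
      have := one_le_psi_sub ζ this; linarith
  · refine ⟨1, fun p => ?_⟩
    refine ⟨2 * (round (p/2) : ℤ), Or.inl ⟨round (p/2), rfl⟩, ?_⟩
    have h := abs_sub_round (p/2)
    have : p - 2*((round (p/2) : ℤ):ℝ) = 2 * (p/2 - (round (p/2) : ℤ)) := by ring
    rw [this, abs_mul, abs_two]; linarith

lemma sepNet_Y : SepNetR (YS ζ) := by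
  constructor
  · refine ⟨1/2, by norm_num, ?_⟩
    rintro x (⟨k, rfl⟩ | ⟨n, rfl⟩) y (⟨k', rfl⟩ | ⟨n', rfl⟩) hne
    · have hk : k ≠ k' := by rintro rfl; exact hne rfl
      have h1 : (1:ℝ) ≤ |(k:ℝ) - k'| := by exact_mod_cast Int.one_le_abs (sub_ne_zero.mpr hk)
      linarith
    · exact half_le_int_sub_psi ζ k n'
    · rw [abs_sub_comm]; exact half_le_int_sub_psi ζ k' n
    · have hn : n ≠ n' := by rintro rfl; exact hne rfl
      have := one_le_psi_sub ζ hn; linarith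
  · refine ⟨1/2, fun p => ?_⟩
    exact ⟨(round p : ℤ), Or.inl ⟨round p, rfl⟩, abs_sub_round p⟩

lemma inv_psi (n : ℕ) :
    Function.invFunOn (ff ζ) (XS ζ) (psi ζ n) = psi ζ (n + 1) := by
  have hex : ∃ a ∈ XS ζ, ff ζ a = psi ζ n :=
    ⟨psi ζ (n + 1), Or.inr ⟨n, rfl⟩, ff_psi ζ n⟩
  have h1 := Function.invFunOn_eq hex
  have h2 := Function.invFunOn_mem hex
  exact ff_injOn ζ h2 (Or.inr ⟨n, rfl⟩) (by rw [h1, ff_psi])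

lemma Yfin (R : ℝ) : ((YS ζ) ∩ Set.Icc (-R) R).Finite := by
  apply Set.Finite.subset ((Set.finite_Icc (⌈-(2*R)⌉) ⌊2*R⌋).image (fun j : ℤ => (j:ℝ)/2))
  rintro x ⟨hx, hI⟩
  obtain ⟨j, hj⟩ : ∃ j : ℤ, x = (j:ℝ)/2 := by
    rcases hx with ⟨k, rfl⟩ | ⟨n, rfl⟩
    · exact ⟨2*k, by push_cast; ring⟩
    · obtain ⟨m, hm⟩ := psi_half ζ n
      exact ⟨2*m+1, by rw [hm]; push_cast; ring⟩
  rw [Set.mem_Icc] at hI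
  refine ⟨j, Set.mem_Icc.mpr ⟨Int.ceil_le.mpr (by rw [hj] at hI; linarith [hI.1]),
    Int.le_floor.mpr (by rw [hj] at hI; linarith [hI.2])⟩, hj.symm⟩

end Stmt12Aux

open Stmt12Aux in
theorem stmt12 (ζ : ℝ → ℝ) (hpos : ∀ R > (0:ℝ), 0 < ζ R)
    (hmono : MonotoneOn ζ (Set.Ioi 0)) :
    ∃ X Y : Set ℝ, SepNetR X ∧ SepNetR Y ∧
      ∃ f : ℝ → ℝ, Set.BijOn f X Y ∧
        (∃ C : ℝ, ∀ᶠ R in atTop, dispR1 X f R ≤ C * R) ∧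
        ¬ (∃ C : ℝ, ∀ᶠ R in atTop, dispR1 Y (Function.invFunOn f X) R ≤ C * ζ R) := by
  refine ⟨XS ζ, YS ζ, sepNet_X ζ, sepNet_Y ζ, ff ζ, ff_bijOn ζ, ⟨1, ?_⟩, ?_⟩
  · filter_upwards [eventually_ge_atTop (0:ℝ)] with R hR
    rw [one_mul, dispR1]
    apply Real.sSup_le _ hR
    rintro v ⟨x, ⟨hxX, hxI⟩, rfl⟩
    rw [Set.mem_Icc] at hxI
    dsimp only
    rcases hxX with ⟨k, rfl⟩ | ⟨n, rfl⟩
    · rw [ff_int]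
      have h1 : |2*(k:ℝ)| ≤ R := abs_le.mpr ⟨hxI.1, hxI.2⟩
      have h2 : |2*(k:ℝ)| = 2 * |(k:ℝ)| := by rw [abs_mul, abs_two]
      have h3 : |(k:ℝ) - 2*k| = |(k:ℝ)| := by
        rw [show (k:ℝ) - 2*k = -(k:ℝ) by ring, abs_neg]
      rw [h3]; linarith
    · rw [ff_psi]
      have h1 := one_le_step ζ n
      have h2 := psi_pos ζ n
      rw [abs_of_nonpos (by linarith)]
      linarith [hxI.2]
  · rintro ⟨C, hC⟩
    rw [eventually_atTop] at hC
    obtain ⟨R0, hR0⟩ := hC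
    set n : ℕ := max ⌈R0⌉₊ ⌈C⌉₊ with hn
    have hpn : 0 < psi ζ n := psi_pos ζ n
    have hRn : R0 ≤ psi ζ n := by
      have h1 : R0 ≤ (⌈R0⌉₊ : ℝ) := Nat.le_ceil R0
      have h2 : ((⌈R0⌉₊:ℕ):ℝ) ≤ (n:ℝ) := by exact_mod_cast le_max_left _ _
      have h3 := psi_ge ζ n
      linarith
    have hCn : C ≤ (n:ℝ) := by
      have h1 : C ≤ (⌈C⌉₊ : ℝ) := Nat.le_ceil C
      have h2 : ((⌈C⌉₊:ℕ):ℝ) ≤ (n:ℝ) := by exact_mod_cast le_max_right _ _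
      linarith
    have hdisp := hR0 (psi ζ n) hRn
    have hlow : psi ζ (n+1) - psi ζ n ≤ dispR1 (YS ζ) (Function.invFunOn (ff ζ) (XS ζ)) (psi ζ n) := by
      rw [dispR1]
      have hbdd : BddAbove ((fun y => |Function.invFunOn (ff ζ) (XS ζ) y - y|) ''
          ((YS ζ) ∩ Set.Icc (-(psi ζ n)) (psi ζ n))) :=
        ((Yfin ζ (psi ζ n)).image _).bddAbove
      have hmem : psi ζ n ∈ (YS ζ) ∩ Set.Icc (-(psi ζ n)) (psi ζ n) :=
        ⟨Or.inr ⟨n, rfl⟩, Set.mem_Icc.mpr ⟨by linarith, le_refl _⟩⟩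
      have hval : |Function.invFunOn (ff ζ) (XS ζ) (psi ζ n) - psi ζ n|
          = psi ζ (n+1) - psi ζ n := by
        rw [inv_psi]
        exact abs_of_nonneg (by linarith [one_le_step ζ n])
      calc psi ζ (n+1) - psi ζ n = |Function.invFunOn (ff ζ) (XS ζ) (psi ζ n) - psi ζ n| :=
            hval.symm
        _ ≤ _ := le_csSup hbdd ⟨psi ζ n, hmem, rfl⟩
    have hgap := psi_gap ζ n
    have hz : 0 < ζ (psi ζ n) := hpos _ hpn
    nlinarith
end
end

section
/- Let φ : (0,∞) → (0,∞) be increasing, X a separated net in ℝ^d, and let (R_i) be a strictly increasing sequence tending to infinity. Let γ : [0,∞) → [0,∞) be the piecewise linear function with γ(0) = 0, γ(R_i + φ(R_i)) = R_i, interpolating linearly between breakpoints. Let g : X → ℝ^d be the radial map g(x) = (γ(‖x‖)/‖x‖)·x (g(0)=0). Then for every i, disp_{R_i + φ(R_i)}(g) ≤ φ(R_i). -/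
open Filter Metric Set Topology

noncomputable section

theorem stmt13 {d : ℕ} (X : Set (EuclideanSpace ℝ (Fin d))) (hX : SepNet X)
    (φ : ℝ → ℝ) (hφpos : ∀ R > (0:ℝ), 0 < φ R) (hφmono : MonotoneOn φ (Set.Ioi 0))
    (R : ℕ → ℝ) (hR0 : R 0 = 0) (hRmono : StrictMono R)
    (hRtop : Tendsto R atTop atTop)
    (S : ℕ → ℝ) (hS0 : S 0 = 0) (hSdef : ∀ i, 1 ≤ i → S i = R i + φ (R i))
    (hSmono : StrictMono S)
    (γ : ℝ → ℝ) (hγ0 : γ 0 = 0)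
    (hγ : ∀ i : ℕ, ∀ t ∈ Set.Icc (S i) (S (i+1)),
      γ t = R i + ((R (i+1) - R i) / (S (i+1) - S i)) * (t - S i)) :
    ∀ i : ℕ, 1 ≤ i → ∀ x ∈ X, ‖x‖ ≤ S i →
      dist ((γ ‖x‖ / ‖x‖) • x) x ≤ φ (R i) := by

  intro i hi x hx hxS
  have hRpos : ∀ j : ℕ, 1 ≤ j → 0 < R j := by
    intro j hj
    have := hRmono (show (0:ℕ) < j by omega)
    rw [hR0] at this; exact this
  have hφi : 0 < φ (R i) := hφpos _ (hRpos i hi)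
  have hxnn : (0:ℝ) ≤ ‖x‖ := norm_nonneg x
  rcases eq_or_lt_of_le hxnn with h0 | h0
  · have hx0 : x = 0 := norm_eq_zero.mp h0.symm
    simp [hx0]
    exact hφi.le
  · set t := ‖x‖ with ht
    -- slope bound
    have hslope : ∀ j : ℕ, R (j+1) - R j ≤ S (j+1) - S j := by
      intro j
      rcases Nat.eq_zero_or_pos j with hj | hj
      · subst hj
        rw [hR0, hS0, hSdef 1 le_rfl]
        have := hφpos (R 1) (hRpos 1 le_rfl)
        linarith
      · rw [hSdef j hj, hSdef (j+1) (by omega)]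
        have h1 : φ (R j) ≤ φ (R (j+1)) :=
          hφmono (hRpos j hj) (hRpos (j+1) (by omega)) (hRmono (Nat.lt_succ_self j)).le
        linarith
    have hdiff : ∀ j : ℕ, ∀ u ∈ Set.Icc (S j) (S (j+1)),
        S j - R j ≤ u - γ u ∧ u - γ u ≤ S (j+1) - R (j+1) := by
      intro j u hu
      have hStep : 0 < S (j+1) - S j := sub_pos.mpr (hSmono (Nat.lt_succ_self j))
      have hγu := hγ j u hu
      set c := (R (j+1) - R j) / (S (j+1) - S j) with hc
      have hc1 : c ≤ 1 := (div_le_one hStep).mpr (hslope j)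
      have hc0 : 0 ≤ c := div_nonneg (by have := hRmono (Nat.lt_succ_self j); linarith) hStep.le
      have hcd : c * (S (j+1) - S j) = R (j+1) - R j := div_mul_cancel₀ _ hStep.ne'
      have key : u - γ u = (S j - R j) + (1 - c) * (u - S j) := by rw [hγu]; ring
      constructor
      · rw [key]; nlinarith [hu.1]
      · have h2 : (1 - c) * (u - S j) ≤ (1 - c) * (S (j+1) - S j) := by nlinarith [hu.2]
        rw [key]; nlinarith
    -- find segment containing t
    have hfind : ∀ n : ℕ, t ≤ S n → ∃ j, j < n ∧ S j ≤ t ∧ t ≤ S (j+1) := by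
      intro n
      induction n with
      | zero => intro h; rw [hS0] at h; linarith
      | succ n ih =>
        intro hti
        by_cases h : t ≤ S n
        · obtain ⟨j, hj, h1, h2⟩ := ih h
          exact ⟨j, by omega, h1, h2⟩
        · exact ⟨n, Nat.lt_succ_self n, le_of_not_ge h, hti⟩
    obtain ⟨j, hji, hj1, hj2⟩ := hfind i hxS
    obtain ⟨hlow, hhigh⟩ := hdiff j t ⟨hj1, hj2⟩
    -- dist computation
    have hdist : dist ((γ t / t) • x) x = |γ t - t| := by
      rw [dist_eq_norm]
      have : (γ t / t) • x - x = (γ t / t - 1) • x := by rw [sub_smul, one_smul]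
      rw [this, norm_smul, Real.norm_eq_abs, ← ht]
      have ha : γ t / t - 1 = (γ t - t) / t := by field_simp
      rw [ha, abs_div, abs_of_pos h0, div_mul_cancel₀ _ h0.ne']
    rw [hdist]
    -- bounds
    have hSjR : 0 ≤ S j - R j := by
      rcases Nat.eq_zero_or_pos j with hj | hj
      · subst hj; rw [hS0, hR0]; norm_num
      · rw [hSdef j hj]
        have := hφpos (R j) (hRpos j hj)
        linarith
    have hup : S (j+1) - R (j+1) ≤ φ (R i) := by
      rcases eq_or_lt_of_le (show j+1 ≤ i by omega) with he | hl
      · rw [hSdef (j+1) (by omega), he]; linarith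
      · rw [hSdef (j+1) (by omega)]
        have : φ (R (j+1)) ≤ φ (R i) :=
          hφmono (hRpos (j+1) (by omega)) (hRpos i hi) (hRmono.monotone (show j+1 ≤ i by omega))
        linarith
    rw [abs_sub_comm, abs_of_nonneg (by linarith)]
    linarith
end
end

section
/- Let X, Z be separated nets in ℝ^d, φ : (0,∞) → (0,∞) increasing, (R_i) a strictly increasing sequence tending to infinity, and Y ⊆ ℝ^d a set such that for each i, |Y ∩ B̄(0, R_i)| ≥ |Z ∩ B̄(0, R_i + φ(R_i))|. Let s_Z be the supremum of gaps between consecutive norms of points of Z (with 0 included). Then every injection f : Y → Z satisfies disp_{R_i}(f) ≥ φ(R_i) − s_Z for every i. -/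
open Filter Metric Set Topology

noncomputable section

lemma sepFinite {d : ℕ} {Z : Set (EuclideanSpace ℝ (Fin d))} {δ : ℝ} (hδ : 0 < δ)
    (hsep : ∀ x ∈ Z, ∀ y ∈ Z, x ≠ y → δ ≤ dist x y) (r : ℝ) :
    (Z ∩ Metric.closedBall 0 r).Finite := by
  obtain ⟨t, -, htfin, hcov⟩ := finite_cover_balls_of_compact
    (isCompact_closedBall (0 : EuclideanSpace ℝ (Fin d)) r) (half_pos hδ)
  have key : ∀ c ∈ t, (Z ∩ Metric.closedBall 0 r ∩ Metric.ball c (δ/2)).Subsingleton := by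
    intro c _ x hx y hy
    by_contra hne
    have := hsep x hx.1.1 y hy.1.1 hne
    have h2 := dist_triangle x c y
    have hx' := mem_ball.1 hx.2
    have hy' := mem_ball.1 hy.2
    have h3 : dist c y = dist y c := dist_comm c y
    linarith
  have : Z ∩ Metric.closedBall 0 r ⊆ ⋃ c ∈ t, (Z ∩ Metric.closedBall 0 r ∩ Metric.ball c (δ/2)) := by
    intro x hx
    obtain ⟨c, hc, hxc⟩ := mem_iUnion₂.1 (hcov hx.2)
    exact mem_iUnion₂.2 ⟨c, hc, ⟨hx, hxc⟩⟩
  exact (htfin.biUnion fun c hc => (key c hc).finite).subset this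

theorem stmt14 {d : ℕ} (Z : Set (EuclideanSpace ℝ (Fin d))) (hZ : SepNet Z)
    (Y : Set (EuclideanSpace ℝ (Fin d)))
    (φ : ℝ → ℝ) (hφpos : ∀ R > (0:ℝ), 0 < φ R) (hφmono : MonotoneOn φ (Set.Ioi 0))
    (R : ℕ → ℝ) (hRmono : StrictMono R) (hRpos : ∀ i, 0 < R i)
    (hRtop : Tendsto R atTop atTop)
    (sZ : ℝ) (hsZ : 0 ≤ sZ)
    (hgap : ∀ t : ℝ, 0 ≤ t → ∃ z ∈ Z, t ≤ ‖z‖ ∧ ‖z‖ ≤ t + sZ)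
    (hfin : ∀ r : ℝ, (Y ∩ Metric.closedBall 0 r).Finite)
    (hcard : ∀ i, (Z ∩ Metric.closedBall 0 (R i + φ (R i))).ncard ≤
      (Y ∩ Metric.closedBall 0 (R i)).ncard)
    (f : EuclideanSpace ℝ (Fin d) → EuclideanSpace ℝ (Fin d))
    (hmap : Set.MapsTo f Y Z) (hinj : Set.InjOn f Y) :
    ∀ i, φ (R i) - sZ ≤ dispR Y f (R i) := by
  intro i
  set Ri := R i with hRi
  set P := φ (R i) with hPdef
  have hP : 0 < P := hφpos _ (hRpos i)
  -- the set of displacements is finite, hence bounded above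
  have hSfin : ((fun x => dist (f x) x) '' (Y ∩ Metric.closedBall 0 Ri)).Finite :=
    (hfin Ri).image _
  have hbdd : BddAbove ((fun x => dist (f x) x) '' (Y ∩ Metric.closedBall 0 Ri)) :=
    hSfin.bddAbove
  have hdisp_ge : ∀ y ∈ Y ∩ Metric.closedBall 0 Ri, dist (f y) y ≤ dispR Y f Ri := by
    intro y hy
    exact le_csSup hbdd ⟨y, hy, rfl⟩
  have hdisp0 : 0 ≤ dispR Y f Ri := by
    rcases Set.eq_empty_or_nonempty (Y ∩ Metric.closedBall 0 Ri) with h | ⟨y, hy⟩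
    · simp [dispR, h, Real.sSup_empty]
    · exact le_trans dist_nonneg (hdisp_ge y hy)
  rcases le_or_gt P sZ with hle | hlt
  · linarith
  -- main case : sZ < P
  obtain ⟨δ, hδ, hsep⟩ := hZ.1
  set r := Ri + P with hrdef
  by_cases hcase : ∀ y ∈ Y ∩ Metric.closedBall 0 Ri, f y ∈ Metric.closedBall 0 r
  · -- all images land in the big ball; counting forces image = Z ∩ ball
    have hZfin : (Z ∩ Metric.closedBall 0 r).Finite := sepFinite hδ hsep r
    have hsub : f '' (Y ∩ Metric.closedBall 0 Ri) ⊆ Z ∩ Metric.closedBall 0 r := by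
      rintro _ ⟨y, hy, rfl⟩
      exact ⟨hmap hy.1, hcase y hy⟩
    have hncard : (f '' (Y ∩ Metric.closedBall 0 Ri)).ncard
        = (Y ∩ Metric.closedBall 0 Ri).ncard :=
      Set.ncard_image_of_injOn (hinj.mono inter_subset_left)
    have heq : f '' (Y ∩ Metric.closedBall 0 Ri) = Z ∩ Metric.closedBall 0 r := by
      apply Set.eq_of_subset_of_ncard_le hsub _ hZfin
      rw [hncard]
      exact hcard i
    obtain ⟨z, hz, hz1, hz2⟩ := hgap (r - sZ) (by linarith [hRpos i])
    have hzmem : z ∈ Z ∩ Metric.closedBall 0 r := by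
      refine ⟨hz, ?_⟩
      rw [mem_closedBall_zero_iff]
      linarith
    rw [← heq] at hzmem
    obtain ⟨y, hy, hfy⟩ := hzmem
    have hnormy : ‖y‖ ≤ Ri := mem_closedBall_zero_iff.1 hy.2
    have h1 : ‖f y‖ - ‖y‖ ≤ dist (f y) y := by
      rw [dist_eq_norm]; exact norm_sub_norm_le _ _
    have h2 : r - sZ ≤ ‖f y‖ := by rw [hfy]; exact hz1
    have := hdisp_ge y hy
    simp only [hrdef] at h2
    linarith
  · -- some image escapes the big ball : huge displacement
    push_neg at hcase
    obtain ⟨y, hy, hfy⟩ := hcase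
    have hnormy : ‖y‖ ≤ Ri := mem_closedBall_zero_iff.1 hy.2
    have h2 : r < ‖f y‖ := by
      by_contra h
      exact hfy (mem_closedBall_zero_iff.2 (not_lt.1 h))
    have h1 : ‖f y‖ - ‖y‖ ≤ dist (f y) y := by
      rw [dist_eq_norm]; exact norm_sub_norm_le _ _
    have := hdisp_ge y hy
    simp only [hrdef] at h2
    linarith
end
end

section
/- Let φ₁, φ₂ : (0,∞) → (0,∞) be increasing, unbounded, concave functions with φ_i(R) ∈ o(R) and φ₁(R) ∈ o(φ₂(R)). Let X, Y₁, Y₂ be separated nets in ℝ^d such that there exists a bijection g : Y₁ → X with disp_R(g) ∈ O(φ₁(R)), while every bijection h : Y₂ → X satisfies disp_R(h) ∉ o(φ₂(R)). Then Y₁ and Y₂ are not bounded displacement equivalent. -/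
open Filter Metric Set Topology

noncomputable section

/-
The bounded displacement equivalence `f : Y₂ → Y₁` composed with `g : Y₁ → X` is a bijection
`Y₂ → X` whose displacement on the ball of radius `R` is at most `disp_{R + D}(g) + D`, where `D`
bounds the displacement of `f`. Concavity and positivity of `φ₁` give `φ₁ (R + D) ≤ 2 φ₁ R` for
`R ≥ 2 D`, so `disp_R (g ∘ f) = O(φ₁ R) = o(φ₂ R)`, contradicting the hypothesis on `Y₂`.
-/

theorem Set.Finite.inter_closedBall_of_le_dist {α : Type*} [MetricSpace α] [ProperSpace α]
    {s : Set α} {δ : ℝ} (hδ : 0 < δ) (hs : s.Pairwise fun x y => δ ≤ dist x y) (c : α) (R : ℝ) :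
    (s ∩ closedBall c R).Finite := by
  have hdisc : IsDiscrete s :=
    ⟨DiscreteTopology.of_forall_le_dist hδ fun x y hxy => hs x.2 y.2 (Subtype.coe_ne_coe.2 hxy)⟩
  rw [inter_comm]
  exact finite_isBounded_inter_isClosed hdisc isBounded_closedBall
    (isClosed_of_pairwise_le_dist hδ hs)

theorem SepNet.finite_inter_closedBall {d : ℕ} {Y : Set (EuclideanSpace ℝ (Fin d))}
    (hY : SepNet Y) (R : ℝ) : (Y ∩ closedBall 0 R).Finite := by
  obtain ⟨δ, hδ, hsep⟩ := hY.1
  exact .inter_closedBall_of_le_dist hδ (fun x hx y hy hxy => hsep x hx y hy hxy) 0 R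

section dispR

variable {d : ℕ} {X : Set (EuclideanSpace ℝ (Fin d))}
  {f : EuclideanSpace ℝ (Fin d) → EuclideanSpace ℝ (Fin d)} {R : ℝ}

theorem dispR_nonneg : 0 ≤ dispR X f R :=
  Real.sSup_nonneg <| by rintro r ⟨x, -, rfl⟩; exact dist_nonneg

theorem dist_le_dispR (hX : (X ∩ closedBall 0 R).Finite) {x : EuclideanSpace ℝ (Fin d)}
    (hx : x ∈ X) (hxR : ‖x‖ ≤ R) : dist (f x) x ≤ dispR X f R :=
  le_csSup (hX.image _).bddAbove ⟨x, ⟨hx, mem_closedBall_zero_iff.2 hxR⟩, rfl⟩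

theorem dispR_le {c : ℝ} (hc : 0 ≤ c) (h : ∀ x ∈ X, ‖x‖ ≤ R → dist (f x) x ≤ c) :
    dispR X f R ≤ c :=
  Real.sSup_le (by rintro r ⟨x, ⟨hx, hxR⟩, rfl⟩; exact h x hx (mem_closedBall_zero_iff.1 hxR)) hc

theorem dispR_comp_le {Y : Set (EuclideanSpace ℝ (Fin d))}
    {g : EuclideanSpace ℝ (Fin d) → EuclideanSpace ℝ (Fin d)} {D : ℝ} (hD : 0 ≤ D)
    (hf : MapsTo f X Y) (hfD : ∀ x ∈ X, dist (f x) x ≤ D) (hY : (Y ∩ closedBall 0 (R + D)).Finite) :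
    dispR X (g ∘ f) R ≤ dispR Y g (R + D) + D := by
  refine dispR_le (add_nonneg dispR_nonneg hD) fun x hx hxR => ?_
  have hfxR : ‖f x‖ ≤ R + D := by
    linarith [norm_le_norm_add_norm_sub' (f x) x, hfD x hx, dist_eq_norm (f x) x]
  calc dist (g (f x)) x ≤ dist (g (f x)) (f x) + dist (f x) x := dist_triangle _ _ _
    _ ≤ dispR Y g (R + D) + D := add_le_add (dist_le_dispR hY (hf hx) hfxR) (hfD x hx)

end dispR

theorem ConcaveOn.sub_mul_le_mul_of_nonneg {φ : ℝ → ℝ} (hφ : ConcaveOn ℝ (Ioi 0) φ) {D R : ℝ}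
    (hD : 0 < D) (hφD : 0 ≤ φ D) (hDR : D ≤ R) : (R - D) * φ (R + D) ≤ R * φ R := by
  have hR : 0 < R := hD.trans_le hDR
  have hcomb : (R - D) / R * (R + D) + D / R * D = R := by field_simp; ring
  have h := hφ.2 (mem_Ioi.2 (by linarith : (0 : ℝ) < R + D)) (mem_Ioi.2 hD)
    (div_nonneg (sub_nonneg.2 hDR) hR.le) (div_nonneg hD.le hR.le) (by field_simp; ring)
  simp only [smul_eq_mul, hcomb] at h
  calc (R - D) * φ (R + D) = R * ((R - D) / R * φ (R + D)) := by field_simp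
    _ ≤ R * ((R - D) / R * φ (R + D) + D / R * φ D) := by
      gcongr; exact le_add_of_nonneg_right (by positivity)
    _ ≤ R * φ R := by gcongr

theorem ConcaveOn.le_two_mul {φ : ℝ → ℝ} (hφ : ConcaveOn ℝ (Ioi 0) φ) (hφpos : ∀ R > 0, 0 < φ R)
    {D R : ℝ} (hD : 0 < D) (hDR : 2 * D ≤ R) : φ (R + D) ≤ 2 * φ R := by
  have h := hφ.sub_mul_le_mul_of_nonneg hD (hφpos D hD).le (by linarith)
  nlinarith [hφpos (R + D) (by linarith), hφpos R (by linarith)]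

theorem tendsto_affine_div_atTop_zero {φ ψ : ℝ → ℝ} (hψ : Tendsto ψ atTop atTop)
    (hφψ : Tendsto (fun R => φ R / ψ R) atTop (𝓝 0)) (a b : ℝ) :
    Tendsto (fun R => (a * φ R + b) / ψ R) atTop (𝓝 0) := by
  have hb : Tendsto (fun R => b / ψ R) atTop (𝓝 0) := tendsto_const_nhds.div_atTop hψ
  have h := (hφψ.const_mul a).add hb
  rw [mul_zero, add_zero] at h
  refine h.congr' ?_
  filter_upwards [hψ.eventually_gt_atTop 0] with R hR
  field_simp

theorem stmt17_general {d : ℕ} (φ₁ φ₂ : ℝ → ℝ)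
    (h1pos : ∀ R > (0:ℝ), 0 < φ₁ R)
    (h1conc : ConcaveOn ℝ (Set.Ioi 0) φ₁)
    (h2top : Tendsto φ₂ atTop atTop)
    (h12 : Tendsto (fun R => φ₁ R / φ₂ R) atTop (𝓝 0))
    (X Y₁ Y₂ : Set (EuclideanSpace ℝ (Fin d)))
    (hY₁ : SepNet Y₁)
    (hg : ∃ g : EuclideanSpace ℝ (Fin d) → EuclideanSpace ℝ (Fin d),
      Set.BijOn g Y₁ X ∧ ∃ C > (0:ℝ), ∃ R₀ : ℝ, ∀ R ≥ R₀, dispR Y₁ g R ≤ C * φ₁ R)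
    (hh : ∀ h : EuclideanSpace ℝ (Fin d) → EuclideanSpace ℝ (Fin d),
      Set.BijOn h Y₂ X → ¬ Tendsto (fun R => dispR Y₂ h R / φ₂ R) atTop (𝓝 0)) :
    ¬ ∃ f : EuclideanSpace ℝ (Fin d) → EuclideanSpace ℝ (Fin d),
        Set.BijOn f Y₂ Y₁ ∧ ∃ D : ℝ, ∀ y ∈ Y₂, dist (f y) y ≤ D := by
  rintro ⟨f, hf, D, hfD⟩
  obtain ⟨g, hg, C, hC, R₀, hgφ⟩ := hg
  set D' := max D 1
  have hD' : 0 < D' := one_pos.trans_le (le_max_right _ _)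
  have hfD' : ∀ y ∈ Y₂, dist (f y) y ≤ D' := fun y hy => (hfD y hy).trans (le_max_left _ _)
  have hgf : ∀ᶠ R in atTop, dispR Y₂ (g ∘ f) R ≤ 2 * C * φ₁ R + D' := by
    filter_upwards [eventually_ge_atTop R₀, eventually_ge_atTop (2 * D')] with R hR₀ hRD
    calc dispR Y₂ (g ∘ f) R ≤ dispR Y₁ g (R + D') + D' :=
          dispR_comp_le hD'.le hf.mapsTo hfD' (hY₁.finite_inter_closedBall _)
      _ ≤ C * φ₁ (R + D') + D' := by gcongr; exact hgφ _ (by linarith)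
      _ ≤ C * (2 * φ₁ R) + D' := by gcongr; exact h1conc.le_two_mul h1pos hD' hRD
      _ = 2 * C * φ₁ R + D' := by ring
  refine hh (g ∘ f) (hg.comp hf) <|
    squeeze_zero' ?_ ?_ (tendsto_affine_div_atTop_zero h2top h12 (2 * C) D')
  · filter_upwards [h2top.eventually_gt_atTop 0] with R hR
    exact div_nonneg dispR_nonneg hR.le
  · filter_upwards [hgf, h2top.eventually_gt_atTop 0] with R hR hφ₂
    gcongr

theorem stmt17 {d : ℕ} (φ₁ φ₂ : ℝ → ℝ)
    (h1pos : ∀ R > (0:ℝ), 0 < φ₁ R) (h2pos : ∀ R > (0:ℝ), 0 < φ₂ R)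
    (h1mono : MonotoneOn φ₁ (Set.Ioi 0)) (h2mono : MonotoneOn φ₂ (Set.Ioi 0))
    (h1conc : ConcaveOn ℝ (Set.Ioi 0) φ₁) (h2conc : ConcaveOn ℝ (Set.Ioi 0) φ₂)
    (h1top : Tendsto φ₁ atTop atTop) (h2top : Tendsto φ₂ atTop atTop)
    (h1o : Tendsto (fun R => φ₁ R / R) atTop (𝓝 0))
    (h2o : Tendsto (fun R => φ₂ R / R) atTop (𝓝 0))
    (h12 : Tendsto (fun R => φ₁ R / φ₂ R) atTop (𝓝 0))
    (X Y₁ Y₂ : Set (EuclideanSpace ℝ (Fin d)))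
    (hX : SepNet X) (hY₁ : SepNet Y₁) (hY₂ : SepNet Y₂)
    (hg : ∃ g : EuclideanSpace ℝ (Fin d) → EuclideanSpace ℝ (Fin d),
      Set.BijOn g Y₁ X ∧ ∃ C > (0:ℝ), ∃ R₀ : ℝ, ∀ R ≥ R₀, dispR Y₁ g R ≤ C * φ₁ R)
    (hh : ∀ h : EuclideanSpace ℝ (Fin d) → EuclideanSpace ℝ (Fin d),
      Set.BijOn h Y₂ X → ¬ Tendsto (fun R => dispR Y₂ h R / φ₂ R) atTop (𝓝 0)) :
    ¬ ∃ f : EuclideanSpace ℝ (Fin d) → EuclideanSpace ℝ (Fin d),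
        Set.BijOn f Y₂ Y₁ ∧ ∃ D : ℝ, ∀ y ∈ Y₂, dist (f y) y ≤ D :=
  stmt17_general φ₁ φ₂ h1pos h1conc h2top h12 X Y₁ Y₂ hY₁ hg hh
end
end

section
/- Let γ : [0,∞) → [0,∞) be a bilipschitz function with γ(0) = 0, and define the radial map g : ℝ^d → ℝ^d by g(x) = (γ(‖x‖)/‖x‖)·x for x ≠ 0 and g(0) = 0. Then g is bilipschitz; consequently, the image under g of any separated net in ℝ^d is a separated net in ℝ^d. -/
open Filter Metric Set Topology

noncomputable section

/-- The radial map associated to . -/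
def radialMap {d : ℕ} (γ : ℝ → ℝ) (x : EuclideanSpace ℝ (Fin d)) :
    EuclideanSpace ℝ (Fin d) :=
  (γ ‖x‖ / ‖x‖) • x

section helpers
variable {E : Type*} [NormedAddCommGroup E] [NormedSpace ℝ E]

lemma lemA (u v : E) (hv : ‖v‖ ≤ 1) (a b : ℝ) :
    ‖a • u - b • v‖ ≤ |a| * ‖u - v‖ + |a - b| := by
  have h : a • u - b • v = a • (u - v) + (a - b) • v := by module
  rw [h]
  calc ‖a • (u - v) + (a - b) • v‖ ≤ ‖a • (u - v)‖ + ‖(a - b) • v‖ := norm_add_le _ _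
    _ ≤ |a| * ‖u - v‖ + |a - b| := by
        rw [norm_smul, norm_smul, Real.norm_eq_abs, Real.norm_eq_abs]
        have := mul_le_of_le_one_right (abs_nonneg (a - b)) hv
        linarith

lemma lemB (u v : E) (hu : ‖u‖ = 1) (hv : ‖v‖ = 1) (a b : ℝ) (hb : 0 ≤ b) (hba : b ≤ a) :
    a * ‖u - v‖ ≤ 2 * ‖a • u - b • v‖ := by
  have ha : 0 ≤ a := hb.trans hba
  have h1 : a * ‖u - v‖ = ‖a • u - a • v‖ := by
    rw [← smul_sub, norm_smul, Real.norm_eq_abs, abs_of_nonneg ha]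
  have h2 : ‖a • u - a • v‖ ≤ ‖a • u - b • v‖ + ‖b • v - a • v‖ := by
    have h : a • u - a • v = (a • u - b • v) + (b • v - a • v) := by abel
    rw [h]; exact norm_add_le _ _
  have h3 : ‖b • v - a • v‖ = a - b := by
    have h : b • v - a • v = (b - a) • v := by module
    rw [h, norm_smul, Real.norm_eq_abs, hv, mul_one, abs_of_nonpos (by linarith)]
    ring
  have h4 : a - b ≤ ‖a • u - b • v‖ := by
    have := norm_sub_norm_le (a • u) (b • v)
    rw [norm_smul, norm_smul, Real.norm_eq_abs, Real.norm_eq_abs, hu, hv, mul_one, mul_one,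
      abs_of_nonneg ha, abs_of_nonneg hb] at this
    linarith
  linarith

lemma key' (γ : ℝ → ℝ) (L : ℝ) (hL : 1 ≤ L) (hγ0 : γ 0 = 0)
    (hγnonneg : ∀ t : ℝ, 0 ≤ t → 0 ≤ γ t)
    (hγbil : ∀ s t : ℝ, 0 ≤ s → 0 ≤ t →
      |s - t| / L ≤ |γ s - γ t| ∧ |γ s - γ t| ≤ L * |s - t|)
    (u v : E) (hnu : ‖u‖ = 1) (hnv : ‖v‖ = 1) (s t : ℝ) (ht0 : 0 ≤ t) (hts : t ≤ s) :
    ‖s • u - t • v‖ ≤ 3 * L * ‖γ s • u - γ t • v‖ ∧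
    ‖γ s • u - γ t • v‖ ≤ 3 * L * ‖s • u - t • v‖ := by
  have hL0 : (0:ℝ) < L := lt_of_lt_of_le one_pos hL
  have hs0 : 0 ≤ s := ht0.trans hts
  have hγs0 : 0 ≤ γ s := hγnonneg s hs0
  have hγt0 : 0 ≤ γ t := hγnonneg t ht0
  have hup : γ s ≤ L * s := by
    have := (hγbil s 0 hs0 le_rfl).2
    rw [hγ0, sub_zero, sub_zero, abs_of_nonneg hs0] at this
    exact le_trans (le_abs_self _) this
  have hlo : s ≤ L * γ s := by
    have h := (hγbil s 0 hs0 le_rfl).1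
    rw [hγ0, sub_zero, sub_zero, abs_of_nonneg hs0, abs_of_nonneg hγs0] at h
    have := mul_le_mul_of_nonneg_right h hL0.le
    rw [div_mul_cancel₀ _ hL0.ne'] at this
    linarith [this, mul_comm (γ s) L]
  have hγst : |γ s - γ t| ≤ L * (s - t) := by
    have h := (hγbil s t hs0 ht0).2
    rwa [abs_of_nonneg (show (0:ℝ) ≤ s - t by linarith)] at h
  have hstγ : s - t ≤ L * |γ s - γ t| := by
    have h := (hγbil s t hs0 ht0).1
    rw [abs_of_nonneg (show (0:ℝ) ≤ s - t by linarith)] at h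
    have := mul_le_mul_of_nonneg_right h hL0.le
    rw [div_mul_cancel₀ _ hL0.ne'] at this
    linarith [mul_comm (|γ s - γ t|) L]
  have hchord : s * ‖u - v‖ ≤ 2 * ‖s • u - t • v‖ := lemB u v hnu hnv s t ht0 hts
  have hγdiff : |γ s - γ t| ≤ ‖γ s • u - γ t • v‖ := by
    have h := abs_norm_sub_norm_le (γ s • u) (γ t • v)
    rwa [norm_smul, norm_smul, Real.norm_eq_abs, Real.norm_eq_abs, hnu, hnv, mul_one, mul_one,
      abs_of_nonneg hγs0, abs_of_nonneg hγt0] at h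
  have hchord' : s * ‖u - v‖ ≤ 2 * L * ‖γ s • u - γ t • v‖ := by
    have huv0 : 0 ≤ ‖u - v‖ := norm_nonneg _
    have hN0 : 0 ≤ ‖γ s • u - γ t • v‖ := norm_nonneg _
    rcases le_total (γ t) (γ s) with h | h
    · have hB := lemB u v hnu hnv (γ s) (γ t) hγt0 h
      nlinarith
    · have hB := lemB v u hnv hnu (γ t) (γ s) hγs0 h
      rw [norm_sub_rev] at hB
      rw [norm_sub_rev (γ t • v)] at hB
      have hsγt : s ≤ L * γ t := by nlinarith
      nlinarith [mul_le_mul_of_nonneg_right hsγt huv0, mul_le_mul_of_nonneg_left hB hL0.le]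
  constructor
  · have hA : ‖s • u - t • v‖ ≤ s * ‖u - v‖ + (s - t) := by
      have h := lemA u v hnv.le s t
      rwa [abs_of_nonneg hs0, abs_of_nonneg (show (0:ℝ) ≤ s - t by linarith)] at h
    have h2 : s - t ≤ L * ‖γ s • u - γ t • v‖ := by
      have := mul_le_mul_of_nonneg_left hγdiff hL0.le
      linarith
    linarith
  · have hA : ‖γ s • u - γ t • v‖ ≤ γ s * ‖u - v‖ + |γ s - γ t| := by
      have h := lemA u v hnv.le (γ s) (γ t)
      rwa [abs_of_nonneg hγs0] at h
    have huv0 : 0 ≤ ‖u - v‖ := norm_nonneg _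
    have h1 : γ s * ‖u - v‖ ≤ L * (s * ‖u - v‖) := by nlinarith
    have h2 : s * ‖u - v‖ ≤ 2 * ‖s • u - t • v‖ := hchord
    have hst : s - t ≤ ‖s • u - t • v‖ := by
      have h := norm_sub_norm_le (s • u) (t • v)
      rwa [norm_smul, norm_smul, Real.norm_eq_abs, Real.norm_eq_abs, hnu, hnv, mul_one, mul_one,
        abs_of_nonneg hs0, abs_of_nonneg ht0] at h
    nlinarith
end helpers

lemma key {d : ℕ} (γ : ℝ → ℝ) (L : ℝ) (hL : 1 ≤ L) (hγ0 : γ 0 = 0)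
    (hγnonneg : ∀ t : ℝ, 0 ≤ t → 0 ≤ γ t)
    (hγbil : ∀ s t : ℝ, 0 ≤ s → 0 ≤ t →
      |s - t| / L ≤ |γ s - γ t| ∧ |γ s - γ t| ≤ L * |s - t|)
    (x y : EuclideanSpace ℝ (Fin d)) (hxy : ‖y‖ ≤ ‖x‖) :
    dist x y ≤ 3 * L * dist (radialMap γ x) (radialMap γ y) ∧
    dist (radialMap γ x) (radialMap γ y) ≤ 3 * L * dist x y := by
  by_cases hx0 : x = 0
  · have hy0 : y = 0 := by
      have : ‖y‖ ≤ 0 := by rw [hx0] at hxy; simpa using hxy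
      exact norm_le_zero_iff.mp this
    subst hx0; subst hy0
    simp
  · have hs0 : 0 < ‖x‖ := norm_pos_iff.mpr hx0
    obtain ⟨u, hnu, hxu⟩ : ∃ u : EuclideanSpace ℝ (Fin d), ‖u‖ = 1 ∧ x = ‖x‖ • u := by
      refine ⟨‖x‖⁻¹ • x, ?_, ?_⟩
      · rw [norm_smul, Real.norm_eq_abs, abs_of_nonneg (inv_nonneg.mpr hs0.le),
          inv_mul_cancel₀ hs0.ne']
      · rw [smul_smul, mul_inv_cancel₀ hs0.ne', one_smul]
    obtain ⟨v, hnv, hyv⟩ : ∃ v : EuclideanSpace ℝ (Fin d), ‖v‖ = 1 ∧ y = ‖y‖ • v := by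
      by_cases hy0 : y = 0
      · exact ⟨u, hnu, by rw [hy0, norm_zero, zero_smul]⟩
      · have ht0 : 0 < ‖y‖ := norm_pos_iff.mpr hy0
        refine ⟨‖y‖⁻¹ • y, ?_, ?_⟩
        · rw [norm_smul, Real.norm_eq_abs, abs_of_nonneg (inv_nonneg.mpr ht0.le),
            inv_mul_cancel₀ ht0.ne']
        · rw [smul_smul, mul_inv_cancel₀ ht0.ne', one_smul]
    have hgx : radialMap γ x = γ ‖x‖ • u := by
      rw [radialMap, hxu]
      rw [norm_smul, Real.norm_eq_abs, hnu, mul_one, abs_norm]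
      rw [smul_smul, div_mul_cancel₀ _ hs0.ne']
    have hgy : radialMap γ y = γ ‖y‖ • v := by
      by_cases hy0 : y = 0
      · rw [hy0, radialMap]
        simp [hγ0]
      · have ht0 : 0 < ‖y‖ := norm_pos_iff.mpr hy0
        rw [radialMap, hyv]
        rw [norm_smul, Real.norm_eq_abs, hnv, mul_one, abs_norm]
        rw [smul_smul, div_mul_cancel₀ _ ht0.ne']
    have hxy' : x - y = ‖x‖ • u - ‖y‖ • v := by rw [← hxu, ← hyv]
    rw [dist_eq_norm, dist_eq_norm, hgx, hgy, hxy']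
    exact key' γ L hL hγ0 hγnonneg hγbil u v hnu hnv ‖x‖ ‖y‖ (norm_nonneg y) hxy

theorem stmt18 {d : ℕ} (γ : ℝ → ℝ) (L : ℝ) (hL : 1 ≤ L) (hγ0 : γ 0 = 0)
    (hγnonneg : ∀ t : ℝ, 0 ≤ t → 0 ≤ γ t)
    (hγbil : ∀ s t : ℝ, 0 ≤ s → 0 ≤ t →
      |s - t| / L ≤ |γ s - γ t| ∧ |γ s - γ t| ≤ L * |s - t|) :
    (∃ L' : ℝ, 1 ≤ L' ∧ ∀ x y : EuclideanSpace ℝ (Fin d),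
      dist x y / L' ≤ dist (radialMap γ x) (radialMap γ y) ∧
      dist (radialMap γ x) (radialMap γ y) ≤ L' * dist x y) ∧
    (∀ X : Set (EuclideanSpace ℝ (Fin d)), SepNet X →
      SepNet (radialMap γ '' X)) := by
  have hL0 : (0:ℝ) < L := by linarith
  have h3L : (0:ℝ) < 3 * L := by linarith
  have main : ∀ x y : EuclideanSpace ℝ (Fin d),
      dist x y ≤ 3 * L * dist (radialMap γ x) (radialMap γ y) ∧
      dist (radialMap γ x) (radialMap γ y) ≤ 3 * L * dist x y := by
    intro x y
    rcases le_total ‖y‖ ‖x‖ with h | h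
    · exact key γ L hL hγ0 hγnonneg hγbil x y h
    · have h2 := key γ L hL hγ0 hγnonneg hγbil y x h
      rw [dist_comm y x, dist_comm (radialMap γ y) (radialMap γ x)] at h2
      exact h2
  have hsurj : ∀ p : EuclideanSpace ℝ (Fin d), ∃ q, radialMap γ q = p := by
    intro p
    by_cases hp : p = 0
    · exact ⟨0, by simp [radialMap, hp]⟩
    · have hp0 : 0 < ‖p‖ := norm_pos_iff.mpr hp
      have hM0 : (0:ℝ) ≤ L * ‖p‖ := by positivity
      have hcont : ContinuousOn γ (Icc 0 (L * ‖p‖)) := by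
        have hlip : LipschitzOnWith (Real.toNNReal L) γ (Icc 0 (L * ‖p‖)) := by
          apply LipschitzOnWith.of_dist_le_mul
          intro a ha b hb
          rw [Real.dist_eq, Real.dist_eq, Real.coe_toNNReal L hL0.le]
          exact (hγbil a b ha.1 hb.1).2
        exact hlip.continuousOn
      have hγM : ‖p‖ ≤ γ (L * ‖p‖) := by
        have h := (hγbil (L * ‖p‖) 0 hM0 le_rfl).1
        rw [hγ0, sub_zero, sub_zero, abs_of_nonneg hM0, abs_of_nonneg (hγnonneg _ hM0)] at h
        have := mul_le_mul_of_nonneg_right h hL0.le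
        rw [div_mul_cancel₀ _ hL0.ne'] at this
        nlinarith
      have hmem : ‖p‖ ∈ Icc (γ 0) (γ (L * ‖p‖)) := ⟨by rw [hγ0]; exact hp0.le, hγM⟩
      obtain ⟨t, ⟨ht0, _⟩, hγt⟩ := intermediate_value_Icc hM0 hcont hmem
      have ht0' : 0 < t := by
        rcases lt_or_eq_of_le ht0 with h | h
        · exact h
        · exfalso; rw [← h, hγ0] at hγt; exact hp0.ne' (by rw [← hγt])
      refine ⟨(t / ‖p‖) • p, ?_⟩
      have hnq : ‖(t / ‖p‖) • p‖ = t := by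
        rw [norm_smul, Real.norm_eq_abs, abs_of_nonneg (div_nonneg ht0 hp0.le),
          div_mul_cancel₀ _ hp0.ne']
      rw [radialMap, hnq, hγt, smul_smul]
      have h1 : ‖p‖ / t * (t / ‖p‖) = 1 := by field_simp
      rw [h1, one_smul]
  constructor
  · refine ⟨3 * L, by linarith, fun x y => ⟨?_, (main x y).2⟩⟩
    rw [div_le_iff₀ h3L, mul_comm]
    exact (main x y).1
  · rintro X ⟨⟨δ, hδ, hsep⟩, ⟨θ, hnet⟩⟩
    constructor
    · refine ⟨δ / (3 * L), div_pos hδ h3L, ?_⟩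
      rintro _ ⟨x, hx, rfl⟩ _ ⟨y, hy, rfl⟩ hne
      have hxy : x ≠ y := fun h => hne (by rw [h])
      have h1 := hsep x hx y hy hxy
      have h2 := (main x y).1
      rw [div_le_iff₀ h3L, mul_comm]
      linarith
    · obtain ⟨x0, _, hd0⟩ := hnet 0
      have hθ0 : 0 ≤ θ := le_trans dist_nonneg hd0
      refine ⟨3 * L * θ, fun p => ?_⟩
      obtain ⟨q, hq⟩ := hsurj p
      obtain ⟨x, hx, hdx⟩ := hnet q
      refine ⟨radialMap γ x, ⟨x, hx, rfl⟩, ?_⟩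
      have h2 := (main q x).2
      rw [hq] at h2
      calc dist p (radialMap γ x) ≤ 3 * L * dist q x := h2
        _ ≤ 3 * L * θ := by
            exact mul_le_mul_of_nonneg_left hdx h3L.le
end
end
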